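/- arXiv:2107.07202 — 4 statements merged into one kernel-verified Lean document; each statement's English description precedes it below -/
import Mathlib

section
/- Assume kG is finite dimensional and semisimple. Let M be a finite dimensional indecomposable H-module all of whose composition factors are isomorphic to V_j for some j ∈ I. Then M ≅ V_t(i) for some i ∈ I and some t ≥ 1. -/
open scoped TensorProduct

namespace HopfOrePaper

/-- A representation of `G` on `V` is simple (irreducible): `V ≠ 0` and the only
`G`-stable subspaces are `0` and `V`. -/
def IsSimpleRep {k G V : Type} [Field k] [Group G] [AddCommGroup V] [Module k V]
    (ρ : Representation k G V) : Prop :=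
  Nontrivial V ∧ ∀ p : Submodule k V, (∀ g : G, ∀ v ∈ p, ρ g v ∈ p) → p = ⊥ ∨ p = ⊤

/-- Isomorphism of representations. -/
def RepIso {k G V V' : Type} [Field k] [Group G] [AddCommGroup V] [Module k V]
    [AddCommGroup V'] [Module k V'] (ρ : Representation k G V)
    (ρ' : Representation k G V') : Prop :=
  ∃ f : V ≃ₗ[k] V', ∀ (g : G) (v : V), f (ρ g v) = ρ' g (f v)

/-- `IsTwistIso χ t ρ ρ'` says that `ρ' ≅ V_{χ^t} ⊗ ρ` as representations of `G`. -/
def IsTwistIso {k G V V' : Type} [Field k] [Group G] [AddCommGroup V] [Module k V]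
    [AddCommGroup V'] [Module k V'] (χ : G →* kˣ) (t : ℤ)
    (ρ : Representation k G V) (ρ' : Representation k G V') : Prop :=
  ∃ f : V ≃ₗ[k] V', ∀ (g : G) (v : V), ρ' g (f v) = ((χ g ^ t : kˣ) : k) • f (ρ g v)

/-- `ρ` and `ρ'` lie in the same class of the equivalence `∼` on simple modules,
i.e. `ρ' ≅ V_{χ^t} ⊗ ρ` for some `t ∈ ℤ` (i.e. `[i] = [j]`). -/
def TwistEquiv {k G V V' : Type} [Field k] [Group G] [AddCommGroup V] [Module k V]
    [AddCommGroup V'] [Module k V'] (χ : G →* kˣ)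
    (ρ : Representation k G V) (ρ' : Representation k G V') : Prop :=
  ∃ t : ℤ, IsTwistIso χ t ρ ρ'

/-- A presentation of the Hopf–Ore extension `H = kG(χ⁻¹, a, 0)`:
`H` is a `k`-algebra containing the group algebra `kG` and an element `x` with
`x·g = χ⁻¹(g)·g·x`, and with `k`-basis `{g xⁱ | g ∈ G, i ∈ ℕ}`. -/
structure HopfOre (k G H : Type) [Field k] [Group G] [Ring H] [Algebra k H]
    (χ : G →* kˣ) : Type where
  emb : MonoidAlgebra k G →ₐ[k] H
  x : H
  comm_rel : ∀ g : G, x * emb (MonoidAlgebra.of k G g)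
      = (((χ g)⁻¹ : kˣ) : k) • (emb (MonoidAlgebra.of k G g) * x)
  basis_li : LinearIndependent k fun p : G × ℕ => emb (MonoidAlgebra.of k G p.1) * x ^ p.2
  basis_span :
    Submodule.span k (Set.range fun p : G × ℕ => emb (MonoidAlgebra.of k G p.1) * x ^ p.2) = ⊤

variable {k G H : Type} [Field k] [Group G] [Ring H] [Algebra k H] {χ : G →* kˣ}

/-- `IsStdQuot HO ρ e c d` says that the `H`-module `W` is (a copy of) the quotient module
`M(V)/cM(V)` of `M(V) = H ⊗_{kG} V`, where `c` is a (central) polynomial in `x` of degree `d`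
(of the form `x^t` or `(x^s - β)^r`): `e` is a `kG`-equivariant embedding of `V` into `W`,
`c` annihilates `W`, and `W = ⊕_{j=0}^{d-1} xʲ·e(V)`. -/
structure IsStdQuot (HO : HopfOre k G H χ) {V W : Type}
    [AddCommGroup V] [Module k V]
    [AddCommGroup W] [Module k W] [Module H W] [IsScalarTower k H W]
    (ρ : Representation k G V) (e : V →ₗ[k] W) (c : H) (d : ℕ) : Prop where
  equivariant : ∀ (g : G) (v : V), e (ρ g v) = HO.emb (MonoidAlgebra.of k G g) • e v
  ann : ∀ w : W, c • w = 0
  xbasis : Function.Bijective fun f : Fin d → V => ∑ j : Fin d, HO.x ^ (j : ℕ) • e (f j)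

/-- A witness exhibiting the `H`-module `W` as a standard quotient module
`M(V_i)/cM(V_i)` for some finite-dimensional simple `kG`-module `V_i`. -/
structure StdWitness (HO : HopfOre k G H χ) (W : Type)
    [AddCommGroup W] [Module k W] [Module H W] [IsScalarTower k H W]
    (c : H) (d : ℕ) : Type 1 where
  V : Type
  [acg : AddCommGroup V]
  [modk : Module k V]
  ρ : Representation k G V
  fin : FiniteDimensional k V
  simple : IsSimpleRep ρ
  e : V →ₗ[k] W
  std : IsStdQuot HO ρ e c d

/-- The representation of `G` obtained from an `H`-module by restriction along
`kG → H`. -/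
noncomputable def resRep (HO : HopfOre k G H χ) (M : Type) [AddCommGroup M] [Module k M]
    [Module H M] [IsScalarTower k H M] : Representation k G M where
  toFun g :=
    { toFun := fun m => HO.emb (MonoidAlgebra.of k G g) • m
      map_add' := fun m n => smul_add _ m n
      map_smul' := fun c m => by
        simp only [RingHom.id_apply]
        exact (smul_comm c (HO.emb (MonoidAlgebra.of k G g)) m).symm }
  map_one' := by
    ext m
    simp only [LinearMap.coe_mk, AddHom.coe_mk, LinearMap.id_coe, id_eq, Module.End.one_apply]
    rw [map_one, map_one, one_smul]
  map_mul' g h := by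
    ext m
    simp only [LinearMap.coe_mk, AddHom.coe_mk, Module.End.mul_apply]
    rw [map_mul, map_mul, mul_smul]

/-- A module over a ring is indecomposable. -/
def IsIndecomposableMod (R M : Type) [Ring R] [AddCommGroup M] [Module R M] : Prop :=
  Nontrivial M ∧ ∀ p q : Submodule R M, IsCompl p q → p = ⊥ ∨ q = ⊥

/-- A module is uniserial if its submodules form a chain. -/
def IsUniserial (R M : Type) [Ring R] [AddCommGroup M] [Module R M] : Prop :=
  ∀ p q : Submodule R M, p ≤ q ∨ q ≤ p

/-- The radical of a module: the intersection of its maximal submodules. -/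
def modRadical (R M : Type) [Ring R] [AddCommGroup M] [Module R M] : Submodule R M :=
  sInf {p : Submodule R M | IsCoatom p}

/-- The socle of a module: the sum of its simple submodules. -/
def modSocle (R M : Type) [Ring R] [AddCommGroup M] [Module R M] : Submodule R M :=
  sSup {p : Submodule R M | IsAtom p}

/-- The radical series `M ⊇ rad M ⊇ rad² M ⊇ ⋯` of a module. -/
noncomputable def radIter (R M : Type) [Ring R] [AddCommGroup M] [Module R M] :
    ℕ → Submodule R M
  | 0 => ⊤
  | j + 1 => Submodule.map (radIter R M j).subtype (modRadical R (radIter R M j))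

/-- The submodule `c•M` of a module `M` (for `c` a central, or normalizing, element). -/
def smulRange {M : Type} (R : Type) [Ring R] [AddCommGroup M] [Module R M] (c : R) :
    Submodule R M :=
  Submodule.span R (Set.range fun m : M => c • m)

/-- The subquotient `q/p` associated with submodules `p ≤ q`. -/
abbrev sectionQuot {R M : Type} [Ring R] [AddCommGroup M] [Module R M]
    (p q : Submodule R M) :=
  ↥q ⧸ (Submodule.comap q.subtype p)

/-- The hypothesis that a given `H`-module structure on `M ⊗[k] N` is the one obtained
from the `H`-module structures of `M` and `N` via the comultiplication of
`H = kG(χ⁻¹,a,0)`, i.e. `Δ(g) = g ⊗ g` and `Δ(x) = x ⊗ a + 1 ⊗ x`. -/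
structure TensorAct (HO : HopfOre k G H χ) (a : G) (M N : Type)
    [AddCommGroup M] [Module k M] [Module H M] [IsScalarTower k H M]
    [AddCommGroup N] [Module k N] [Module H N] [IsScalarTower k H N]
    [Module H (M ⊗[k] N)] [IsScalarTower k H (M ⊗[k] N)] : Prop where
  g_tmul : ∀ (g : G) (m : M) (n : N),
    HO.emb (MonoidAlgebra.of k G g) • (m ⊗ₜ[k] n)
      = (HO.emb (MonoidAlgebra.of k G g) • m) ⊗ₜ[k] (HO.emb (MonoidAlgebra.of k G g) • n)
  x_tmul : ∀ (m : M) (n : N),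
    HO.x • (m ⊗ₜ[k] n)
      = (HO.x • m) ⊗ₜ[k] (HO.emb (MonoidAlgebra.of k G a) • n) + m ⊗ₜ[k] (HO.x • n)

/-- The twist of a representation by the `t`-th power of a character: this is the
representation `V_{χ^t} ⊗ ρ`, realized on the same space (`σ^t` applied to `ρ`). -/
def twistRep {k G V : Type} [Field k] [Group G] [AddCommGroup V] [Module k V]
    (χ : G →* kˣ) (t : ℤ) (ρ : Representation k G V) : Representation k G V where
  toFun g := ((χ g ^ t : kˣ) : k) • ρ g
  map_one' := by simp
  map_mul' g h := by
    ext v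
    simp only [map_mul, mul_zpow, Units.val_mul, LinearMap.smul_apply, Module.End.mul_apply,
      map_smul, smul_smul, mul_comm]

/-- The one-dimensional representation attached to a linear character. -/
def charRep (k : Type) {G : Type} [Field k] [Group G] (μ : G →* kˣ) :
    Representation k G k where
  toFun g := ((μ g : k) • LinearMap.id)
  map_one' := by
    simp only [map_one, Units.val_one, one_smul]
    rfl
  map_mul' g h := by
    ext
    simp [mul_smul, mul_comm]

/-- `SubRepIso ρT p ρ` : `p` is a `G`-stable subspace of the representation `ρT`
and, as a representation of `G`, it is isomorphic to `ρ`. -/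
def SubRepIso {k G X V : Type} [Field k] [Group G] [AddCommGroup X] [Module k X]
    [AddCommGroup V] [Module k V]
    (ρT : Representation k G X) (p : Submodule k X) (ρ : Representation k G V) : Prop :=
  (∀ g : G, ∀ y ∈ p, ρT g y ∈ p) ∧
  ∃ f : V ≃ₗ[k] ↥p, ∀ (g : G) (v : V), (f (ρ g v) : X) = ρT g (f v)

end HopfOrePaper

/-!
Since `g x = χ(g) x g`, kernels and images of powers of `x` are `G`-stable, and `kG` is
semisimple, so `G`-stable subspaces have `G`-stable complements. The composition factors force
`x` to be nilpotent, of index `t` say. A simple `G`-submodule `U` on which `x^(t-1)` is injective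
generates `U ⊕ xU ⊕ ⋯ ⊕ x^(t-1)U`, and this is a direct summand of `M` as an `H`-module: if `C` is
a `G`-complement of `x^(t-1)U`, then `{m | xʲm ∈ C for all j < t}` is an `H`-complement, by a
dimension count. Indecomposability then gives `M = U ⊕ xU ⊕ ⋯ ⊕ x^(t-1)U ≅ V_t(U)`.
-/

open Module

theorem pow_smul_eq_zero_of_smul_mem_castSucc {R M : Type*} [Ring R] [AddCommGroup M]
    [Module R M] {n : ℕ} (s : Fin (n + 1) → Submodule R M) (hs : s 0 = ⊥) (c : R)
    (hc : ∀ j : Fin n, ∀ m ∈ s j.succ, c • m ∈ s j.castSucc) (i : Fin (n + 1)) :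
    ∀ m ∈ s i, c ^ (i : ℕ) • m = 0 := by
  induction i using Fin.induction with
  | zero => simp [hs]
  | succ j ih =>
    intro m hm
    rw [Fin.val_succ, pow_succ, mul_smul]
    exact ih _ (hc j m hm)

theorem finrank_le_card_mul_finrank_quotient_add_finrank_iInf_comap {K V W ι : Type*} [Field K]
    [AddCommGroup V] [Module K V] [AddCommGroup W] [Module K W] [FiniteDimensional K V]
    [FiniteDimensional K W] [Fintype ι] (C : Submodule K W) (f : ι → V →ₗ[K] W) :
    finrank K V ≤ Fintype.card ι * finrank K (W ⧸ C) + finrank K ↥(⨅ i, C.comap (f i)) := by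
  let Ψ : V →ₗ[K] ι → W ⧸ C := LinearMap.pi fun i => C.mkQ ∘ₗ f i
  have hker : LinearMap.ker Ψ = ⨅ i, C.comap (f i) := by
    simp only [Ψ, LinearMap.ker_pi, LinearMap.ker_comp, Submodule.ker_mkQ]
  have hrange : finrank K (LinearMap.range Ψ) ≤ Fintype.card ι * finrank K (W ⧸ C) := by
    simpa [Module.finrank_pi_fintype] using Submodule.finrank_le (LinearMap.range Ψ)
  rw [← hker, ← LinearMap.finrank_range_add_finrank_ker Ψ]
  omega

theorem finrank_map_of_disjoint_ker {K V W : Type*} [Field K] [AddCommGroup V] [Module K V]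
    [AddCommGroup W] [Module K W] [FiniteDimensional K V] {f : V →ₗ[K] W} {U : Submodule K V}
    (hU : Disjoint U (LinearMap.ker f)) : finrank K (U.map f) = finrank K U := by
  rw [← LinearMap.range_domRestrict]
  exact LinearMap.finrank_range_of_inj fun a b hab =>
    Subtype.ext (LinearMap.disjoint_ker_iff_injOn.mp hU a.2 b.2 hab)

namespace Subrepresentation

variable {k G V : Type} [Field k] [Group G] [AddCommGroup V] [Module k V]
  {ρ : Representation k G V}

instance [IsSemisimpleRing (MonoidAlgebra k G)] : ComplementedLattice (Subrepresentation ρ) :=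
  subrepresentationSubmoduleOrderIso.complementedLattice_iff.mpr inferInstance

instance [IsSemisimpleRing (MonoidAlgebra k G)] : IsAtomic (Subrepresentation ρ) :=
  subrepresentationSubmoduleOrderIso.isAtomic_iff.mpr inferInstance

theorem disjoint_toSubmodule {σ τ : Subrepresentation ρ} (h : Disjoint σ τ) :
    Disjoint σ.toSubmodule τ.toSubmodule :=
  disjoint_iff.mpr (congrArg toSubmodule (disjoint_iff.mp h))

theorem isCompl_toSubmodule {σ τ : Subrepresentation ρ} (h : IsCompl σ τ) :
    IsCompl σ.toSubmodule τ.toSubmodule :=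
  ⟨disjoint_toSubmodule h.disjoint,
    codisjoint_iff.mpr (congrArg toSubmodule (codisjoint_iff.mp h.codisjoint))⟩

theorem exists_isAtom_disjoint [IsSemisimpleRing (MonoidAlgebra k G)] {K : Subrepresentation ρ}
    (hK : K ≠ ⊤) : ∃ U : Subrepresentation ρ, IsAtom U ∧ Disjoint U K := by
  obtain ⟨U', hU'⟩ := exists_isCompl K
  have hU'ne : U' ≠ ⊥ := fun h => hK (eq_top_of_isCompl_bot (h ▸ hU'))
  obtain ⟨U, hU, hUU'⟩ := (eq_bot_or_exists_atom_le U').resolve_left hU'ne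
  exact ⟨U, hU, hU'.symm.disjoint.mono_left hUU'⟩

theorem isSimpleRep_toRepresentation {U : Subrepresentation ρ} (hU : IsAtom U) :
    HopfOrePaper.IsSimpleRep U.toRepresentation := by
  refine ⟨Submodule.nontrivial_iff_ne_bot.mpr fun h => hU.1 (toSubmodule_injective h), ?_⟩
  intro p hp
  let P : Subrepresentation ρ :=
    ⟨p.map U.toSubmodule.subtype, by rintro g _ ⟨v, hv, rfl⟩; exact ⟨_, hp g v hv, rfl⟩⟩
  have hPU : P ≤ U := by rintro _ ⟨v, -, rfl⟩; exact v.2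
  refine (hU.le_iff.mp hPU).imp (fun h => ?_) (fun h => ?_)
  · exact Submodule.map_injective_of_injective U.toSubmodule.injective_subtype
      ((congrArg toSubmodule h).trans (Submodule.map_bot _).symm)
  · exact Submodule.map_injective_of_injective U.toSubmodule.injective_subtype
      ((congrArg toSubmodule h).trans (Submodule.map_subtype_top _).symm)

end Subrepresentation

namespace HopfOrePaper.HopfOre

variable {k G H : Type} [Field k] [Group G] [Ring H] [Algebra k H] {χ : G →* kˣ}
variable (HO : HopfOre k G H χ)
variable {M : Type} [AddCommGroup M] [Module k M] [Module H M] [IsScalarTower k H M]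

theorem emb_of_mul_x_pow (g : G) (j : ℕ) :
    HO.emb (MonoidAlgebra.of k G g) * HO.x ^ j
      = ((χ g : k) ^ j) • (HO.x ^ j * HO.emb (MonoidAlgebra.of k G g)) := by
  have hgx : HO.emb (MonoidAlgebra.of k G g) * HO.x
      = (χ g : k) • (HO.x * HO.emb (MonoidAlgebra.of k G g)) := by
    rw [HO.comm_rel, smul_smul, Units.mul_inv, one_smul]
  induction j with
  | zero => simp
  | succ j ih =>
    rw [pow_succ, ← mul_assoc, ih, smul_mul_assoc, mul_assoc, hgx, mul_smul_comm, smul_smul,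
      ← pow_succ, ← mul_assoc, ← pow_succ]

theorem resRep_x_pow_smul (g : G) (j : ℕ) (m : M) :
    resRep HO M g (HO.x ^ j • m) = ((χ g : k) ^ j) • HO.x ^ j • resRep HO M g m := by
  change HO.emb _ • HO.x ^ j • m = _ • HO.x ^ j • HO.emb _ • m
  rw [← mul_smul, emb_of_mul_x_pow, smul_assoc, mul_smul]

variable (M) in
noncomputable def xPow (j : ℕ) : Module.End k M := Algebra.lsmul k k M (HO.x ^ j)

@[simp] theorem xPow_apply (j : ℕ) (m : M) : HO.xPow M j m = HO.x ^ j • m := rfl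

noncomputable def comapXPow (σ : Subrepresentation (resRep HO M)) (j : ℕ) :
    Subrepresentation (resRep HO M) where
  toSubmodule := σ.toSubmodule.comap (HO.xPow M j)
  apply_mem_toSubmodule g m hm := by
    have h := σ.apply_mem_toSubmodule g hm
    rw [xPow_apply, resRep_x_pow_smul] at h
    exact (σ.toSubmodule.smul_mem_iff (pow_ne_zero _ (χ g).ne_zero)).mp h

noncomputable def mapXPow (σ : Subrepresentation (resRep HO M)) (j : ℕ) :
    Subrepresentation (resRep HO M) where
  toSubmodule := σ.toSubmodule.map (HO.xPow M j)
  apply_mem_toSubmodule g := by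
    rintro _ ⟨u, hu, rfl⟩
    refine ⟨(χ g : k) ^ j • resRep HO M g u,
      σ.toSubmodule.smul_mem _ (σ.apply_mem_toSubmodule g hu), ?_⟩
    rw [xPow_apply, xPow_apply, resRep_x_pow_smul, smul_comm]

def submoduleOfStable (p : Submodule k M) (hg : ∀ g : G, ∀ m ∈ p, resRep HO M g m ∈ p)
    (hx : ∀ m ∈ p, HO.x • m ∈ p) : Submodule H M where
  __ := p
  smul_mem' h m hm := by
    have hxpow : ∀ i : ℕ, HO.x ^ i • m ∈ p := fun i => by
      induction i with
      | zero => simpa using hm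
      | succ i ih => rw [pow_succ', mul_smul]; exact hx _ ih
    have hh : h ∈ Submodule.span k
        (Set.range fun q : G × ℕ => HO.emb (MonoidAlgebra.of k G q.1) * HO.x ^ q.2) := by
      rw [HO.basis_span]; trivial
    induction hh using Submodule.span_induction with
    | mem y hy =>
      obtain ⟨⟨g, i⟩, rfl⟩ := hy
      rw [mul_smul]
      exact hg g _ (hxpow i)
    | zero => rw [zero_smul]; exact p.zero_mem
    | add y z _ _ hy hz => rw [add_smul]; exact p.add_mem hy hz
    | smul c y _ hy => rw [smul_assoc]; exact p.smul_mem c hy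

theorem eq_bot_or_eq_bot_of_isCompl (hind : IsIndecomposableMod H M) {p q : Submodule k M}
    (hpg : ∀ g : G, ∀ m ∈ p, resRep HO M g m ∈ p) (hpx : ∀ m ∈ p, HO.x • m ∈ p)
    (hqg : ∀ g : G, ∀ m ∈ q, resRep HO M g m ∈ q) (hqx : ∀ m ∈ q, HO.x • m ∈ q)
    (hpq : IsCompl p q) : p = ⊥ ∨ q = ⊥ := by
  have hH : IsCompl (HO.submoduleOfStable p hpg hpx) (HO.submoduleOfStable q hqg hqx) :=
    ⟨Submodule.disjoint_def.mpr fun m => Submodule.disjoint_def.mp hpq.disjoint m,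
      Submodule.codisjoint_iff_exists_add_eq.mpr fun m =>
        Submodule.codisjoint_iff_exists_add_eq.mp hpq.codisjoint m⟩
  exact (hind.2 _ _ hH).imp
    (fun h => show (HO.submoduleOfStable p hpg hpx).restrictScalars k = ⊥ by simp [h])
    (fun h => show (HO.submoduleOfStable q hqg hqx).restrictScalars k = ⊥ by simp [h])

/-- Bijectivity of `xSum U t` says that `M = U ⊕ xU ⊕ ⋯ ⊕ x^(t-1)U`. -/
noncomputable def xSum (U : Submodule k M) (t : ℕ) : (Fin t → U) →ₗ[k] M :=
  ∑ j : Fin t, HO.xPow M j ∘ₗ U.subtype ∘ₗ LinearMap.proj j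

theorem xSum_apply (U : Submodule k M) (t : ℕ) (f : Fin t → U) :
    HO.xSum U t f = ∑ j : Fin t, HO.x ^ (j : ℕ) • (f j : M) := by
  simp [xSum]

theorem x_pow_smul_eq_zero_of_le {M : Type} [AddCommGroup M] [Module H M] {t : ℕ}
    (hxt : ∀ m : M, HO.x ^ t • m = 0) {n : ℕ} (hn : t ≤ n) (m : M) : HO.x ^ n • m = 0 := by
  rw [← Nat.sub_add_cancel hn, pow_add, mul_smul, hxt, smul_zero]

theorem x_pow_smul_xSum_eq {t : ℕ} (hxt : ∀ m : M, HO.x ^ t • m = 0) {U : Submodule k M}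
    (f : Fin t → U) (i : Fin t) (hf : ∀ j < i, f j = 0) :
    HO.x ^ (t - 1 - i) • HO.xSum U t f = HO.x ^ (t - 1) • (f i : M) := by
  have hi := i.isLt
  rw [xSum_apply, Finset.smul_sum, Finset.sum_eq_single i]
  · rw [← mul_smul, ← pow_add, Nat.sub_add_cancel (by omega)]
  · intro j _ hji
    rcases lt_or_gt_of_ne hji with h | h
    · simp [hf j h]
    · have h' : (i : ℕ) < j := h
      rw [← mul_smul, ← pow_add]
      exact x_pow_smul_eq_zero_of_le HO hxt (by omega) _
  · simp

theorem eq_zero_of_x_pow_smul_xSum_mem {t : ℕ} (hxt : ∀ m : M, HO.x ^ t • m = 0)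
    {U : Submodule k M} (hU : Disjoint U (LinearMap.ker (HO.xPow M (t - 1))))
    {C : Submodule k M} (hC : Disjoint C (U.map (HO.xPow M (t - 1)))) {f : Fin t → U}
    (hf : ∀ j : ℕ, HO.x ^ j • HO.xSum U t f ∈ C) : f = 0 := by
  funext i
  induction i using WellFoundedLT.induction with
  | _ i ih =>
    have hC' : HO.x ^ (t - 1) • (f i : M) ∈ C := x_pow_smul_xSum_eq HO hxt f i ih ▸ hf _
    have h0 : HO.x ^ (t - 1) • (f i : M) = 0 :=
      Submodule.disjoint_def.mp hC _ hC' ⟨f i, (f i).2, rfl⟩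
    exact Subtype.ext (Submodule.disjoint_def.mp hU _ (f i).2 h0)

theorem xSum_injective {t : ℕ} (hxt : ∀ m : M, HO.x ^ t • m = 0) {U : Submodule k M}
    (hU : Disjoint U (LinearMap.ker (HO.xPow M (t - 1)))) : Function.Injective (HO.xSum U t) :=
  (injective_iff_map_eq_zero _).mpr fun f hf =>
    eq_zero_of_x_pow_smul_xSum_mem HO hxt hU disjoint_bot_left fun j => by simp [hf]

theorem x_smul_mem_range_xSum {t : ℕ} (hxt : ∀ m : M, HO.x ^ t • m = 0) (U : Submodule k M)
    {m : M} (hm : m ∈ LinearMap.range (HO.xSum U t)) :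
    HO.x • m ∈ LinearMap.range (HO.xSum U t) := by
  obtain ⟨f, rfl⟩ := hm
  cases t with
  | zero => simp [xSum_apply]
  | succ n =>
    refine ⟨Fin.cons 0 fun j => f j.castSucc, ?_⟩
    rw [xSum_apply, xSum_apply, Fin.sum_univ_succ, Fin.sum_univ_castSucc, smul_add,
      Finset.smul_sum]
    simp only [Fin.cons_zero, Fin.cons_succ, Fin.val_succ, Fin.val_castSucc, Fin.val_last,
      ZeroMemClass.coe_zero, smul_zero, zero_add, ← mul_smul, ← pow_succ', hxt, add_zero]

theorem resRep_mem_range_xSum (U : Subrepresentation (resRep HO M)) (t : ℕ) (g : G) {m : M}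
    (hm : m ∈ LinearMap.range (HO.xSum U.toSubmodule t)) :
    resRep HO M g m ∈ LinearMap.range (HO.xSum U.toSubmodule t) := by
  obtain ⟨f, rfl⟩ := hm
  refine ⟨fun j => ⟨(χ g : k) ^ (j : ℕ) • resRep HO M g (f j),
    U.toSubmodule.smul_mem _ (U.apply_mem_toSubmodule g (f j).2)⟩, ?_⟩
  rw [xSum_apply, xSum_apply, map_sum]
  refine Finset.sum_congr rfl fun j _ => ?_
  rw [resRep_x_pow_smul, smul_comm]

theorem exists_isCompl_range_xSum [IsSemisimpleRing (MonoidAlgebra k G)]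
    [FiniteDimensional k M] {t : ℕ} (hxt : ∀ m : M, HO.x ^ t • m = 0)
    (U : Subrepresentation (resRep HO M))
    (hU : Disjoint U.toSubmodule (LinearMap.ker (HO.xPow M (t - 1)))) :
    ∃ Q : Submodule k M, (∀ g : G, ∀ m ∈ Q, resRep HO M g m ∈ Q) ∧ (∀ m ∈ Q, HO.x • m ∈ Q) ∧
      IsCompl (LinearMap.range (HO.xSum U.toSubmodule t)) Q := by
  obtain ⟨C, hC⟩ := exists_isCompl (HO.mapXPow U (t - 1))
  replace hC := Subrepresentation.isCompl_toSubmodule hC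
  set Q := ⨅ j : Fin t, C.toSubmodule.comap (HO.xPow M j)
  have hxQ : ∀ m ∈ Q, ∀ j : ℕ, HO.x ^ j • m ∈ C.toSubmodule := by
    intro m hm j
    rcases lt_or_ge j t with hj | hj
    · exact (Submodule.mem_iInf _).mp hm ⟨j, hj⟩
    · rw [x_pow_smul_eq_zero_of_le HO hxt hj]
      exact zero_mem _
  have hdisj : Disjoint (LinearMap.range (HO.xSum U.toSubmodule t)) Q := by
    refine Submodule.disjoint_def.mpr ?_
    rintro _ ⟨f, rfl⟩ hm
    rw [eq_zero_of_x_pow_smul_xSum_mem HO hxt hU hC.symm.disjoint (hxQ _ hm), map_zero]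
  refine ⟨Q, fun g m hm => ?_, fun m hm => ?_, hdisj, ?_⟩
  · exact (Submodule.mem_iInf _).mpr fun j =>
      (HO.comapXPow C j).apply_mem_toSubmodule g ((Submodule.mem_iInf _).mp hm j)
  · refine (Submodule.mem_iInf _).mpr fun j => ?_
    simpa [← mul_smul, ← pow_succ] using hxQ m hm (j + 1)
  -- `Q` is cut out by `t` conditions modulo `C`, and `M ⧸ C ≃ x^(t-1) U ≃ U`.
  have hcodimC : finrank k (M ⧸ C.toSubmodule) = finrank k U.toSubmodule :=
    (Submodule.quotientEquivOfIsCompl _ _ hC.symm).finrank_eq.trans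
      (finrank_map_of_disjoint_ker hU)
  have hQ : finrank k M ≤ Fintype.card (Fin t) * finrank k (M ⧸ C.toSubmodule) + finrank k Q :=
    finrank_le_card_mul_finrank_quotient_add_finrank_iInf_comap C.toSubmodule
      fun j : Fin t => HO.xPow M j
  have hW : finrank k (LinearMap.range (HO.xSum U.toSubmodule t))
      = t * finrank k U.toSubmodule := by
    rw [LinearMap.finrank_range_of_inj (HO.xSum_injective hxt hU), Module.finrank_pi_fintype]
    simp
  have hsup :=
    Submodule.finrank_sup_add_finrank_inf_eq (LinearMap.range (HO.xSum U.toSubmodule t)) Q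
  rw [hdisj.eq_bot, finrank_bot, add_zero] at hsup
  rw [Fintype.card_fin, hcodimC, ← hW] at hQ
  rw [codisjoint_iff]
  exact Submodule.eq_top_of_finrank_eq (le_antisymm (Submodule.finrank_le _) (by omega))

theorem xSum_bijective [IsSemisimpleRing (MonoidAlgebra k G)] [FiniteDimensional k M]
    (hind : IsIndecomposableMod H M) {t : ℕ} (ht : 0 < t) (hxt : ∀ m : M, HO.x ^ t • m = 0)
    (U : Subrepresentation (resRep HO M)) (hU0 : U ≠ ⊥)
    (hU : Disjoint U.toSubmodule (LinearMap.ker (HO.xPow M (t - 1)))) :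
    Function.Bijective (HO.xSum U.toSubmodule t) := by
  have hinj := HO.xSum_injective hxt hU
  obtain ⟨Q, hQg, hQx, hWQ⟩ := HO.exists_isCompl_range_xSum hxt U hU
  have hW : LinearMap.range (HO.xSum U.toSubmodule t) ≠ ⊥ := by
    obtain ⟨u, hu, hu0⟩ := Submodule.exists_mem_ne_zero_of_ne_bot fun h =>
      hU0 (Subrepresentation.toSubmodule_injective h)
    rw [Ne, LinearMap.range_eq_bot]
    intro h0
    have := congrFun (@hinj (fun _ => ⟨u, hu⟩) 0 (by simp [h0])) ⟨0, ht⟩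
    exact hu0 (congrArg Subtype.val this)
  have hQ : Q = ⊥ := (HO.eq_bot_or_eq_bot_of_isCompl hind (HO.resRep_mem_range_xSum U t)
    (fun _ => HO.x_smul_mem_range_xSum hxt _) hQg hQx hWQ).resolve_left hW
  exact ⟨hinj, LinearMap.range_eq_top.mp (eq_top_of_isCompl_bot (hQ ▸ hWQ))⟩

end HopfOrePaper.HopfOre

namespace HopfOrePaper

theorem stmt_9_general {k G H : Type} [Field k] [Group G]
    [Ring H] [Algebra k H]
    {χ : G →* kˣ}
    (hss : IsSemisimpleRing (MonoidAlgebra k G))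
    (HO : HopfOre k G H χ)
    (M : Type) [AddCommGroup M] [Module k M] [Module H M] [IsScalarTower k H M]
    [FiniteDimensional k M]
    (hind : IsIndecomposableMod H M)
    (hcf : ∃ cs : CompositionSeries (Submodule H M),
      cs 0 = ⊥ ∧ cs (Fin.last cs.length) = ⊤ ∧
      ∀ j : Fin cs.length, ∀ m ∈ cs j.succ, HO.x • m ∈ cs j.castSucc) :
    ∃ t : ℕ, 0 < t ∧ Nonempty (StdWitness HO M (HO.x ^ t) t) := by
  classical
  obtain ⟨cs, hbot, htop, hcs⟩ := hcf
  have hnil : ∃ n, ∀ m : M, HO.x ^ n • m = 0 := ⟨cs.length, fun m =>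
    pow_smul_eq_zero_of_smul_mem_castSucc cs hbot HO.x hcs (Fin.last _) m (htop ▸ trivial)⟩
  set t := Nat.find hnil
  have hxt : ∀ m : M, HO.x ^ t • m = 0 := Nat.find_spec hnil
  have ht : 0 < t := by
    obtain ⟨m, hm⟩ := @exists_ne M hind.1 0
    exact Nat.pos_of_ne_zero fun h0 => hm (by simpa [h0] using hxt m)
  have hK : HO.comapXPow ⊥ (t - 1) ≠ ⊤ := fun h =>
    Nat.find_min hnil (by omega : t - 1 < t) fun m =>
      (Submodule.mem_bot k).mp (h ▸ trivial : m ∈ (HO.comapXPow ⊥ (t - 1)).toSubmodule)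
  have := hss
  obtain ⟨U, hUatom, hUK⟩ := Subrepresentation.exists_isAtom_disjoint hK
  have hbij := HO.xSum_bijective hind ht hxt U hUatom.1
    (Subrepresentation.disjoint_toSubmodule hUK)
  exact ⟨t, ht, ⟨StdWitness.mk (V := U.toSubmodule) (ρ := U.toRepresentation)
    (fin := inferInstance) (simple := Subrepresentation.isSimpleRep_toRepresentation hUatom)
    (e := U.toSubmodule.subtype)
    (std := ⟨fun _ _ => rfl, hxt, funext (HO.xSum_apply U.toSubmodule t) ▸ hbij⟩)⟩⟩

/-- **Theorem 4.6.** Assume `kG` is finite-dimensional and semisimple.  Let `M` be a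
finite-dimensional indecomposable `H`-module each of whose composition factors is
`x`-torsion (i.e. isomorphic to some `V_j`).  Then `M ≅ V_t(i) = M(V_i)/x^tM(V_i)`
for some simple `kG`-module `V_i` and some `t ≥ 1`. -/
theorem stmt_9 {k G H : Type} [Field k] [IsAlgClosed k] [Group G] [Finite G]
    [Ring H] [Algebra k H]
    {χ : G →* kˣ} (a : G) (ha : a ∈ Subgroup.center G) (hχa : χ a ≠ 1)
    (hss : IsSemisimpleRing (MonoidAlgebra k G))
    (HO : HopfOre k G H χ)
    (M : Type) [AddCommGroup M] [Module k M] [Module H M] [IsScalarTower k H M]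
    [FiniteDimensional k M]
    (hind : IsIndecomposableMod H M)
    (hcf : ∃ cs : CompositionSeries (Submodule H M),
      cs 0 = ⊥ ∧ cs (Fin.last cs.length) = ⊤ ∧
      ∀ j : Fin cs.length, ∀ m ∈ cs j.succ, HO.x • m ∈ cs j.castSucc) :
    ∃ t : ℕ, 0 < t ∧ Nonempty (StdWitness HO M (HO.x ^ t) t) :=
  stmt_9_general hss HO M hind hcf

end HopfOrePaper
end

section
/- Assume kG is finite dimensional and semisimple and |q| = |χ| = s. Let β ∈ k^× and let M be a finite dimensional H-module with M = M^{(β)}, where M^{(β)} = {m ∈ M : (x^s − β)^r m = 0 for some integer r > 0}. Then rad(M) = (x^s − β)M. -/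
open scoped TensorProduct

namespace HopfOrePaper

variable {k G H : Type} [Field k] [Group G] [Ring H] [Algebra k H] {χ : G →* kˣ}

/-!
On a module `N` annihilated by `c = x^s - β` the element `x` acts invertibly, with `x^s = β`.
Averaging a `kG`-linear projection onto an `H`-submodule (it exists as `kG` is semisimple) over
conjugation by `x^i`, `0 ≤ i < s`, gives an `H`-linear projection: conjugation by `x` rescales
each `g` by `χ(g)⁻¹`, so every conjugate stays `kG`-linear, and `x^s = β` makes the average
commute with `x`. Dividing by `s` is possible because `χ a` is a primitive `s`-th root of unity. So
`M / cM` is semisimple and `rad M ≤ cM`. Conversely `χ^s = 1` makes `c` central, and `c` is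
nilpotent on `M`, so on each simple quotient of `M` it acts by a nilpotent element of a division
ring, i.e. by `0`: `cM ≤ rad M`.
-/

section CentralElement

variable {R M : Type} [Ring R] [AddCommGroup M] [Module R M]

def smulOfCommute (c : R) (hc : ∀ r, Commute c r) : Module.End R M where
  toFun m := c • m
  map_add' := smul_add c
  map_smul' r m := by rw [RingHom.id_apply, ← mul_smul, hc r, mul_smul]

theorem smulRange_le_jacobson {c : R} (hc : ∀ r, Commute c r) {n : ℕ}
    (hn : ∀ m : M, c ^ n • m = 0) : smulRange R c ≤ Module.jacobson R M := by
  classical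
  refine Submodule.span_le.2 ?_
  rintro _ ⟨m, rfl⟩
  refine Submodule.mem_sInf.2 fun p hp => ?_
  have : IsSimpleModule R (M ⧸ p) := isSimpleModule_iff_isCoatom.2 hp
  have hzero : smulOfCommute (M := M ⧸ p) c hc = 0 := by
    refine IsNilpotent.eq_zero ⟨n, LinearMap.ext fun q => ?_⟩
    induction q using Submodule.Quotient.induction_on with
    | H m' =>
      rw [Module.End.pow_apply, LinearMap.zero_apply]
      change (c • ·)^[n] _ = 0
      rw [smul_iterate]
      dsimp only
      rw [← Submodule.Quotient.mk_smul, hn, Submodule.Quotient.mk_zero]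
  rw [← Submodule.Quotient.mk_eq_zero, Submodule.Quotient.mk_smul]
  exact LinearMap.congr_fun hzero (Submodule.Quotient.mk m)

theorem smul_quotient_smulRange_eq_zero (c : R) (q : M ⧸ smulRange (M := M) R c) :
    c • q = 0 := by
  induction q using Submodule.Quotient.induction_on with
  | H m =>
    rw [← Submodule.Quotient.mk_smul, Submodule.Quotient.mk_eq_zero]
    exact Submodule.subset_span ⟨m, rfl⟩

end CentralElement

section ConjAvg

variable {A : Type*} [Ring A]

def conjAvg (u : Aˣ) (s : ℕ) (a : A) : A :=
  ∑ i ∈ Finset.range s, ConjAct.toConjAct (u ^ i) • a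

theorem commute_iff_toConjAct_smul_eq (u : Aˣ) (a : A) :
    Commute (u : A) a ↔ ConjAct.toConjAct u • a = a := by
  rw [ConjAct.units_smul_def, ConjAct.ofConjAct_toConjAct, Units.mul_inv_eq_iff_eq_mul]
  rfl

theorem commute_unit_conjAvg (u : Aˣ) {s : ℕ} {a : A} (h : Commute ((u : A) ^ s) a) :
    Commute (u : A) (conjAvg u s a) := by
  set f : ℕ → A := fun i => ConjAct.toConjAct (u ^ i) • a
  have hperiod : f s = f 0 := by
    simp only [f, pow_zero, map_one, one_smul]
    exact (commute_iff_toConjAct_smul_eq _ _).1 (Units.val_pow_eq_pow_val u s ▸ h)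
  have hshift : ∑ i ∈ Finset.range s, f (i + 1) = ∑ i ∈ Finset.range s, f i :=
    add_right_cancel ((Finset.sum_range_succ' f s).symm.trans
      (hperiod ▸ Finset.sum_range_succ f s))
  rw [commute_iff_toConjAct_smul_eq, conjAvg, Finset.smul_sum, ← hshift]
  simp only [f, ← mul_smul, ← map_mul, ← pow_succ']

theorem commute_conjAvg_of_mul_eq_smul [Algebra k A] (u : Aˣ) (s : ℕ) {a y : A} {t : k}
    (ht : t ≠ 0) (hu : (u : A) * y = t • (y * u)) (ha : Commute a y) :
    Commute (conjAvg u s a) y := by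
  have hconj : ConjAct.toConjAct u • y = t • y := by
    rw [ConjAct.units_smul_def, ConjAct.ofConjAct_toConjAct, hu, smul_mul_assoc, mul_assoc,
      Units.mul_inv, mul_one]
  have hconj_pow (i : ℕ) : ConjAct.toConjAct (u ^ i) • y = t ^ i • y := by
    induction i with
    | zero => simp
    | succ i ih => rw [pow_succ', map_mul, mul_smul, ih, smul_comm, hconj, smul_smul, pow_succ]
  refine Commute.sum_left _ _ _ fun i _ => ?_
  have := ha.map (MulDistribMulAction.toMonoidHom A (ConjAct.toConjAct (u ^ i)))
  simp only [MulDistribMulAction.toMonoidHom_apply, hconj_pow] at this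
  simpa [ht] using this.smul_right (t ^ i)⁻¹

variable {R V : Type*} [Ring R] [AddCommGroup V] [Module R V] {P : Submodule R V}

theorem conjAvg_apply_mem (u : (Module.End R V)ˣ) (s : ℕ) {e : Module.End R V}
    (hu : ∀ v ∈ P, (u : Module.End R V) v ∈ P) (he : ∀ v, e v ∈ P) (v : V) :
    conjAvg u s e v ∈ P := by
  simp only [conjAvg, LinearMap.sum_apply, ConjAct.units_smul_def,
    ConjAct.ofConjAct_toConjAct, Units.val_pow_eq_pow_val, Module.End.mul_apply]
  exact P.sum_mem fun i _ => Module.End.pow_apply_mem_of_forall_mem i hu _ (he _)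

theorem conjAvg_apply_of_mem (u : (Module.End R V)ˣ) (s : ℕ) {e : Module.End R V}
    (hu : ∀ v ∈ P, (↑u⁻¹ : Module.End R V) v ∈ P) (he : ∀ v ∈ P, e v = v) {v : V}
    (hv : v ∈ P) : conjAvg u s e v = s • v := by
  simp only [conjAvg, LinearMap.sum_apply, ConjAct.units_smul_def,
    ConjAct.ofConjAct_toConjAct, Module.End.mul_apply]
  rw [Finset.sum_congr rfl fun i _ => ?_, Finset.sum_const, Finset.card_range]
  rw [← inv_pow, Units.val_pow_eq_pow_val u⁻¹,
    he _ (Module.End.pow_apply_mem_of_forall_mem i hu _ hv), ← Module.End.mul_apply,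
    ← Units.val_pow_eq_pow_val, ← Units.val_mul, inv_pow, mul_inv_cancel, Units.val_one,
    Module.End.one_apply]

end ConjAvg

theorem exists_proj_commute_of_isSemisimpleRing {B : Type*} [Ring B] [Algebra k B]
    [IsSemisimpleRing B] (φ : B →ₐ[k] H) {N : Type*} [AddCommGroup N] [Module k N] [Module H N]
    [IsScalarTower k H N] (P : Submodule H N) :
    ∃ π : Module.End k N, (∀ v, π v ∈ P) ∧ (∀ v ∈ P, π v = v) ∧
      ∀ b, Commute π (Algebra.lsmul k k N (φ b)) := by
  let _ : Module B N := Module.compHom N φ.toRingHom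
  have : IsScalarTower k B N := .of_algebraMap_smul fun r v => by
    change φ (algebraMap k B r) • v = r • v
    rw [φ.commutes, algebraMap_smul]
  let P' : Submodule B N :=
    { P.toAddSubmonoid with smul_mem' := fun b _ hv => P.smul_mem (φ b) hv }
  obtain ⟨C, hC⟩ := exists_isCompl P'
  exact ⟨(P'.projection C hC).restrictScalars k, P'.projection_apply_mem hC,
    fun v hv => P'.projection_apply_of_mem_left hC (x := v) hv,
    fun b => LinearMap.ext fun v => (P'.projection C hC).map_smul b v⟩

namespace HopfOre

variable (HO : HopfOre k G H χ)

theorem x_pow_mul_of (i : ℕ) (g : G) :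
    HO.x ^ i * HO.emb (MonoidAlgebra.of k G g)
      = (((χ g)⁻¹ ^ i : kˣ) : k) • (HO.emb (MonoidAlgebra.of k G g) * HO.x ^ i) := by
  induction i with
  | zero => simp
  | succ i ih =>
    rw [pow_succ, mul_assoc, HO.comm_rel, mul_smul_comm, ← mul_assoc, ih, smul_mul_assoc,
      smul_smul, mul_assoc, ← pow_succ, pow_succ' (χ g)⁻¹, Units.val_mul]

theorem adjoin_eq_top :
    Algebra.adjoin k (Set.range (fun g => HO.emb (MonoidAlgebra.of k G g)) ∪ {HO.x}) = ⊤ := by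
  set S := Algebra.adjoin k (Set.range (fun g => HO.emb (MonoidAlgebra.of k G g)) ∪ {HO.x})
  have hgen : Set.range (fun p : G × ℕ => HO.emb (MonoidAlgebra.of k G p.1) * HO.x ^ p.2)
      ⊆ Subalgebra.toSubmodule S := by
    rintro _ ⟨⟨g, i⟩, rfl⟩
    exact S.mul_mem (Algebra.subset_adjoin (Set.mem_union_left _ ⟨g, rfl⟩))
      (S.pow_mem (Algebra.subset_adjoin (Set.mem_union_right _ rfl)) i)
  refine top_le_iff.1 fun h _ => ?_
  exact Submodule.span_le.2 hgen (HO.basis_span ▸ Submodule.mem_top : h ∈ Submodule.span k _)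

theorem commute_of_commute_generators {A : Type*} [Ring A] [Algebra k A] (φ : H →ₐ[k] A)
    {a : A} (hg : ∀ g, Commute a (φ (HO.emb (MonoidAlgebra.of k G g))))
    (hx : Commute a (φ HO.x)) (h : H) : Commute a (φ h) := by
  have hle : Algebra.adjoin k (Set.range (fun g => HO.emb (MonoidAlgebra.of k G g)) ∪ {HO.x})
      ≤ (Subalgebra.centralizer k ({a} : Set A)).comap φ := by
    refine Algebra.adjoin_le ?_
    rintro _ (⟨g, rfl⟩ | rfl)
    · exact fun _ hb => hb ▸ hg g
    · exact fun _ hb => hb ▸ hx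
  exact hle (HO.adjoin_eq_top ▸ Algebra.mem_top) a rfl

theorem commute_x_pow_sub_algebraMap {s : ℕ} (hχs : χ ^ s = 1) (β : k) (h : H) :
    Commute (HO.x ^ s - algebraMap k H β) h := by
  refine HO.commute_of_commute_generators (AlgHom.id k H) (fun g => ?_) ?_ h
  · refine Commute.sub_left ?_ (Algebra.commute_algebraMap_left β _)
    have hχg : (χ g)⁻¹ ^ s = 1 := by
      rw [inv_pow, ← MonoidHom.pow_apply, hχs, MonoidHom.one_apply, inv_one]
    simpa [Commute, SemiconjBy, hχg] using HO.x_pow_mul_of s g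
  · exact ((Commute.refl HO.x).pow_left s).sub_left (Algebra.commute_algebraMap_left β _)

theorem isSemisimpleModule_of_smul_eq_zero (hss : IsSemisimpleRing (MonoidAlgebra k G))
    {s : ℕ} (hs : s ≠ 0) (hsk : (s : k) ≠ 0) {β : k} (hβ : β ≠ 0)
    (N : Type*) [AddCommGroup N] [Module k N] [Module H N] [IsScalarTower k H N]
    (hN : ∀ n : N, (HO.x ^ s - algebraMap k H β) • n = 0) : IsSemisimpleModule H N := by
  refine { exists_isCompl := fun P => ?_ }
  let ρ : H →ₐ[k] Module.End k N := Algebra.lsmul k k N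
  have hρs : ρ HO.x ^ s = algebraMap k _ β := by
    rw [← map_pow, ← AlgHom.commutes ρ, ← sub_eq_zero, ← map_sub]
    exact LinearMap.ext hN
  have hunit : IsUnit (ρ HO.x) :=
    (isUnit_pow_iff hs).1 (hρs ▸ (isUnit_iff_ne_zero.2 hβ).map (algebraMap k _))
  set u := hunit.unit
  have hus : (u : Module.End k N) ^ s = algebraMap k _ β := by rw [IsUnit.unit_spec, hρs]
  have hu_inv : (↑u⁻¹ : Module.End k N) = ρ (β⁻¹ • HO.x ^ (s - 1)) := by
    refine Units.inv_eq_of_mul_eq_one_right ?_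
    rw [IsUnit.unit_spec, ← map_mul, mul_smul_comm, ← pow_succ', Nat.sub_add_cancel
      (Nat.one_le_iff_ne_zero.2 hs), map_smul, map_pow, hρs, Algebra.smul_def, ← map_mul,
      inv_mul_cancel₀ hβ, map_one]
  obtain ⟨π, hπP, hπid, hπg⟩ := exists_proj_commute_of_isSemisimpleRing HO.emb P
  let e : Module.End k N := (s : k)⁻¹ • conjAvg u s π
  have he : ∀ h, Commute e (ρ h) := by
    refine HO.commute_of_commute_generators ρ (fun g => ?_) ?_
    · refine ((commute_conjAvg_of_mul_eq_smul u s ((χ g)⁻¹).ne_zero ?_ (hπg _)).smul_left _)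
      rw [IsUnit.unit_spec, ← map_mul, HO.comm_rel, map_smul, map_mul]
    · rw [← IsUnit.unit_spec hunit]
      have hx := commute_unit_conjAvg u (hus ▸ Algebra.commute_algebraMap_left β π)
      exact hx.symm.smul_left _
  let F : N →ₗ[H] N :=
    { toFun := e
      map_add' := e.map_add
      map_smul' := fun h n => LinearMap.congr_fun (he h) n }
  refine ⟨LinearMap.ker F, LinearMap.IsProj.isCompl ⟨fun v => ?_, fun v hv => ?_⟩⟩
  · exact P.smul_of_tower_mem _ (conjAvg_apply_mem (P := P.restrictScalars k) u s
      (fun v hv => P.smul_mem HO.x hv) hπP v)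
  · change (s : k)⁻¹ • conjAvg u s π v = v
    rw [conjAvg_apply_of_mem (P := P.restrictScalars k) u s
      (fun v hv => hu_inv ▸ P.smul_mem _ hv) hπid hv, ← Nat.cast_smul_eq_nsmul k, smul_smul,
      inv_mul_cancel₀ hsk, one_smul]

end HopfOre

theorem stmt_11_general {k G H : Type} [Field k] [Group G]
    [Ring H] [Algebra k H]
    {χ : G →* kˣ} (a : G)
    (hss : IsSemisimpleRing (MonoidAlgebra k G))
    (s : ℕ) (hs : 1 < s) (hχord : orderOf χ = s) (hqord : orderOf (χ a) = s)
    (HO : HopfOre k G H χ)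
    (M : Type) [AddCommGroup M] [Module k M] [Module H M] [IsScalarTower k H M]
    [FiniteDimensional k M]
    (β : k) (hβ : β ≠ 0)
    (hM : ∀ m : M, ∃ r : ℕ, 0 < r ∧ ((HO.x ^ s - algebraMap k H β) ^ r) • m = 0) :
    modRadical H M = smulRange (M := M) H (HO.x ^ s - algebraMap k H β) := by
  have hs0 : s ≠ 0 := by omega
  have hχs : χ ^ s = 1 := hχord ▸ pow_orderOf_eq_one χ
  have hsk : (s : k) ≠ 0 := by
    have : NeZero s := ⟨hs0⟩
    exact (IsPrimitiveRoot.coe_units_iff.2 (hqord ▸ IsPrimitiveRoot.orderOf (χ a))).neZero'.out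
  set c := HO.x ^ s - algebraMap k H β
  obtain ⟨n, hn⟩ : IsNilpotent (Algebra.lsmul k k M c) :=
    Module.End.isNilpotent_iff_of_finite.2 fun m => by
      obtain ⟨r, -, hr⟩ := hM m
      exact ⟨r, by rwa [← map_pow]⟩
  have : IsSemisimpleModule H (M ⧸ smulRange (M := M) H c) :=
    HO.isSemisimpleModule_of_smul_eq_zero hss hs0 hsk hβ _ (smul_quotient_smulRange_eq_zero c)
  exact le_antisymm (Module.jacobson_le_of_eq_bot (IsSemisimpleModule.jacobson_eq_bot H _))
    (smulRange_le_jacobson (HO.commute_x_pow_sub_algebraMap hχs β)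
      fun m => by simpa [← map_pow] using LinearMap.congr_fun hn m)

/-- **Lemma 4.9.** Assume `kG` is finite-dimensional and semisimple and `|q| = |χ| = s`.
Let `β ∈ k^×` and let `M` be a finite-dimensional `H`-module with `M = M^{(β)}`,
i.e. every `m ∈ M` is annihilated by some power of `x^s - β`.
Then `rad(M) = (x^s - β)M`. -/
theorem stmt_11 {k G H : Type} [Field k] [IsAlgClosed k] [Group G] [Finite G]
    [Ring H] [Algebra k H]
    {χ : G →* kˣ} (a : G) (ha : a ∈ Subgroup.center G) (hχa : χ a ≠ 1)
    (hss : IsSemisimpleRing (MonoidAlgebra k G))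
    (s : ℕ) (hs : 1 < s) (hχord : orderOf χ = s) (hqord : orderOf (χ a) = s)
    (HO : HopfOre k G H χ)
    (M : Type) [AddCommGroup M] [Module k M] [Module H M] [IsScalarTower k H M]
    [FiniteDimensional k M]
    (β : k) (hβ : β ≠ 0)
    (hM : ∀ m : M, ∃ r : ℕ, 0 < r ∧ ((HO.x ^ s - algebraMap k H β) ^ r) • m = 0) :
    modRadical H M = smulRange (M := M) H (HO.x ^ s - algebraMap k H β) :=
  stmt_11_general a hss s hs hχord hqord HO M β hβ hM

end HopfOrePaper
end

section
/- Assume kG is finite dimensional and semisimple and |q| = |χ| = s. Let i, j ∈ I, α, β ∈ k^× and r, t ≥ 1. Then V_r(i,α) ≅ V_t(j,β) as H-modules if and only if r = t, α = β and [i] = [j]. -/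
open scoped TensorProduct

namespace HopfOrePaper

variable {k G H : Type} [Field k] [Group G] [Ring H] [Algebra k H] {χ : G →* kˣ}

open Polynomial

/-!
With `d = r s`, the module `W = V_r(i,α)` is `⊕_{j<d} xʲ·e(V)`, so a nonzero polynomial `q` of
degree `< d` gives `q(x)·e(v) = ∑ qⱼ xʲ·e(v) ≠ 0` for `v ≠ 0`. Hence the minimal polynomial of
the action of `x` on `W` is `(X^s - α)^r`; being an isomorphism invariant, it recovers `r` and `α`.
The `xʲ`-coordinates on `W'` satisfy `coordⱼ(g·w) = χ(g)ʲ ρ'(g)(coordⱼ w)`, so for an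
`H`-isomorphism `φ`, a nonzero coordinate of `φ ∘ e` is by Schur's lemma an isomorphism
`V' ≅ V_{χ^{-j}} ⊗ V`.

Conversely, since `χ^s = 1` we may assume `V' ≅ V_{χ^{-n}} ⊗ V` via `f` with `n ≥ 0`. Then
`v ↦ xⁿ·e'(f v)` is `G`-equivariant and killed by `(x^s - α)^r`; reducing `xᵐ` modulo that
polynomial shows it extends to an `H`-linear map `W → W'`, which is bijective because `x` acts
invertibly on `W'` when `α ≠ 0`.
-/

theorem isUnit_of_aeval_eq_zero {A : Type} [Ring A] [Algebra k A] {p : k[X]} {y : A}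
    (hy : aeval y p = 0) (hp0 : p.coeff 0 ≠ 0) : IsUnit y := by
  set q := aeval y p.divX
  have hqy : q * y = -algebraMap k A (p.coeff 0) := by
    refine eq_neg_of_add_eq_zero_left ?_
    rw [← hy]
    conv_rhs => rw [← divX_mul_X_add p]
    rw [map_add, map_mul, aeval_X, aeval_C]
  have hyq : y * q = q * y :=
    calc y * q = aeval y (X * p.divX) := by rw [map_mul, aeval_X]
      _ = q * y := by rw [mul_comm, map_mul, aeval_X]
  have hinv : (-(p.coeff 0)⁻¹) • (q * y) = 1 := by
    rw [hqy, smul_neg, neg_smul, neg_neg, Algebra.smul_def, ← map_mul, inv_mul_cancel₀ hp0,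
      map_one]
  exact isUnit_iff_exists.mpr ⟨-(p.coeff 0)⁻¹ • q, by rw [mul_smul_comm, hyq, hinv],
    by rw [smul_mul_assoc, hinv]⟩

theorem eq_of_X_pow_sub_C_pow_eq {s r t : ℕ} {α β : k} (hs : 0 < s) (hr : 0 < r)
    (h : (X ^ s - C α) ^ r = (X ^ s - C β) ^ t) : r = t ∧ α = β := by
  have hdeg := congrArg natDegree h
  simp only [natDegree_pow, natDegree_X_pow_sub_C] at hdeg
  obtain rfl : r = t := Nat.eq_of_mul_eq_mul_right hs hdeg
  refine ⟨rfl, by_contra fun hne => ?_⟩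
  have hcop : IsCoprime ((X ^ s - C α) ^ r) ((X ^ s - C β) ^ r) := by
    have := (isCoprime_X_sub_C_of_isUnit_sub (sub_ne_zero.mpr hne).isUnit).map
      (expand k s : k[X] →+* k[X])
    simpa using this.pow
  rw [h, isCoprime_self] at hcop
  have := natDegree_eq_zero_of_isUnit hcop
  rw [natDegree_pow, natDegree_X_pow_sub_C] at this
  exact Nat.mul_ne_zero hr.ne' hs.ne' this

theorem aeval_smul_modByMonic {M : Type} [AddCommGroup M] [Module H M] {y : H} {p : k[X]}
    (hann : ∀ m : M, aeval y p • m = 0) (q : k[X]) (m : M) :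
    aeval y (q %ₘ p) • m = aeval y q • m := by
  conv_rhs => rw [← modByMonic_add_div q p]
  rw [map_add, map_mul, add_smul, mul_smul, hann, add_zero]

section Modules

variable {M M' : Type} [AddCommGroup M] [Module k M] [Module H M] [IsScalarTower k H M]
  [AddCommGroup M'] [Module k M'] [Module H M'] [IsScalarTower k H M']

theorem aeval_lsmul_eq_zero {y : H} {p : k[X]} (hann : ∀ m : M, aeval y p • m = 0) :
    aeval (Algebra.lsmul k k M y) p = 0 := by
  ext m
  rw [aeval_algHom_apply, Algebra.lsmul_apply, hann, LinearMap.zero_apply]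

theorem minpoly_lsmul_eq_of_linearEquiv (φ : M ≃ₗ[H] M') (h : H) :
    minpoly k (Algebra.lsmul k k M' h) = minpoly k (Algebra.lsmul k k M h) := by
  rw [← minpoly.algEquiv_eq ((φ.restrictScalars k).conjAlgEquiv k)]
  congr 1
  ext m
  simp [LinearEquiv.conjAlgEquiv_apply]

end Modules

section Twist

variable {V V' : Type} [AddCommGroup V] [Module k V] [AddCommGroup V'] [Module k V']
  {ρ : Representation k G V} {ρ' : Representation k G V'}

theorem units_zpow_neg_mul_pow (u : kˣ) (n : ℕ) :
    ((u ^ (-(n : ℤ)) : kˣ) : k) * (u : k) ^ n = 1 := by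
  rw [zpow_neg, zpow_natCast, ← Units.val_pow_eq_pow_val, Units.inv_mul]

theorem isTwistIso_of_ne_zero (hρ : IsSimpleRep ρ) (hρ' : IsSimpleRep ρ') {f : V →ₗ[k] V'}
    (hf : f ≠ 0) {n : ℕ} (hfρ : ∀ g v, f (ρ g v) = (χ g : k) ^ n • ρ' g (f v)) :
    IsTwistIso χ (-n) ρ ρ' := by
  have hρ'f : ∀ g v, ρ' g (f v) = ((χ g ^ (-(n : ℤ)) : kˣ) : k) • f (ρ g v) := fun g v => by
    rw [hfρ, smul_smul, units_zpow_neg_mul_pow, one_smul]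
  have hker : LinearMap.ker f = ⊥ := by
    refine (hρ.2 _ fun g v hv => ?_).resolve_right fun h => hf (LinearMap.ker_eq_top.mp h)
    rw [LinearMap.mem_ker] at hv ⊢
    rw [hfρ, hv, map_zero, smul_zero]
  have hrange : LinearMap.range f = ⊤ := by
    refine (hρ'.2 _ fun g w hw => ?_).resolve_left fun h => hf (LinearMap.range_eq_bot.mp h)
    obtain ⟨v, rfl⟩ := hw
    rw [hρ'f]
    exact Submodule.smul_mem _ _ (LinearMap.mem_range_self f _)
  exact ⟨.ofBijective f ⟨LinearMap.ker_eq_bot.mp hker, LinearMap.range_eq_top.mp hrange⟩, hρ'f⟩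

theorem IsTwistIso.exists_neg_natCast {s : ℕ} (hχ : orderOf χ = s) (hs : 0 < s) {u : ℤ}
    (h : IsTwistIso χ u ρ ρ') : ∃ n : ℕ, IsTwistIso χ (-n) ρ ρ' := by
  refine ⟨((-u) % s).toNat, ?_⟩
  have hχu : χ ^ (-(((-u) % s).toNat : ℤ)) = χ ^ u := by
    rw [Int.toNat_of_nonneg (Int.emod_nonneg _ (by omega)), ← hχ, zpow_neg χ, zpow_mod_orderOf,
      zpow_neg χ]
    exact inv_inv (χ ^ u)
  obtain ⟨f, hf⟩ := h
  exact ⟨f, fun g v => by rw [hf, ← MonoidHom.zpow_apply, ← MonoidHom.zpow_apply, hχu]⟩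

end Twist

namespace HopfOre

variable (HO : HopfOre k G H χ) {V M : Type} [AddCommGroup V] [Module k V]
  [AddCommGroup M] [Module k M] [Module H M] [IsScalarTower k H M]

theorem of_mul_x_pow (g : G) (n : ℕ) :
    HO.emb (MonoidAlgebra.of k G g) * HO.x ^ n
      = ((χ g : k) ^ n) • (HO.x ^ n * HO.emb (MonoidAlgebra.of k G g)) := by
  induction n with
  | zero => simp
  | succ n ih =>
    have hx : HO.emb (MonoidAlgebra.of k G g) * HO.x
        = (χ g : k) • (HO.x * HO.emb (MonoidAlgebra.of k G g)) := by
      rw [HO.comm_rel g, smul_smul, ← Units.val_mul, mul_inv_cancel, Units.val_one, one_smul]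
    rw [pow_succ, ← mul_assoc, ih, smul_mul_assoc, mul_assoc, hx, mul_smul_comm, smul_smul,
      pow_succ, mul_assoc]

theorem of_smul_x_pow_smul (g : G) (n : ℕ) (m : M) :
    HO.emb (MonoidAlgebra.of k G g) • HO.x ^ n • m
      = (χ g : k) ^ n • HO.x ^ n • HO.emb (MonoidAlgebra.of k G g) • m := by
  rw [← mul_smul, of_mul_x_pow, smul_assoc, mul_smul]

noncomputable def powSum (ψ : V →ₗ[k] M) (d : ℕ) : (Fin d → V) →ₗ[k] M :=
  ∑ j : Fin d, Algebra.lsmul k k M (HO.x ^ (j : ℕ)) ∘ₗ ψ ∘ₗ LinearMap.proj j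

variable {HO}

theorem powSum_apply (ψ : V →ₗ[k] M) (d : ℕ) (F : Fin d → V) :
    HO.powSum ψ d F = ∑ j : Fin d, HO.x ^ (j : ℕ) • ψ (F j) := by
  simp only [powSum, LinearMap.sum_apply, LinearMap.comp_apply, LinearMap.proj_apply,
    Algebra.lsmul_apply]

theorem powSum_single (ψ : V →ₗ[k] M) {d : ℕ} (j : Fin d) (v : V) :
    HO.powSum ψ d (Pi.single j v) = HO.x ^ (j : ℕ) • ψ v := by
  rw [powSum_apply, Finset.sum_eq_single j (fun i _ hi => by simp [hi]) (by simp)]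
  simp

theorem powSum_coeff (ψ : V →ₗ[k] M) {d : ℕ} {q : k[X]} (hq : q.degree < d) (v : V) :
    HO.powSum ψ d (fun j => q.coeff j • v) = aeval HO.x q • ψ v := by
  rcases eq_or_ne q 0 with rfl | hq0
  · simp [powSum_apply]
  rw [powSum_apply, aeval_eq_sum_range' ((natDegree_lt_iff_degree_lt hq0).mpr hq),
    Finset.sum_smul, ← Fin.sum_univ_eq_sum_range]
  refine Finset.sum_congr rfl fun j _ => ?_
  rw [map_smul, smul_assoc, smul_comm]

theorem of_smul_powSum {ρ : Representation k G V} {ψ : V →ₗ[k] M}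
    (hψ : ∀ g v, ψ (ρ g v) = HO.emb (MonoidAlgebra.of k G g) • ψ v) {d : ℕ} (g : G)
    (F : Fin d → V) :
    HO.emb (MonoidAlgebra.of k G g) • HO.powSum ψ d F
      = HO.powSum ψ d (fun j => (χ g : k) ^ (j : ℕ) • ρ g (F j)) := by
  simp only [powSum_apply, Finset.smul_sum, of_smul_x_pow_smul, map_smul, hψ,
    smul_comm _ ((χ g : k) ^ _)]

end HopfOre

namespace IsStdQuot

open HopfOre

variable {HO : HopfOre k G H χ} {V V' W W' M : Type} [AddCommGroup V] [Module k V]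
  [AddCommGroup V'] [Module k V']
  [AddCommGroup W] [Module k W] [Module H W] [IsScalarTower k H W]
  [AddCommGroup W'] [Module k W'] [Module H W'] [IsScalarTower k H W']
  [AddCommGroup M] [Module k M] [Module H M] [IsScalarTower k H M]
  {ρ : Representation k G V} {ρ' : Representation k G V'} {e : V →ₗ[k] W} {e' : V' →ₗ[k] W'}
  {c c' : H} {d d' : ℕ} {p : k[X]}

noncomputable def equiv (hW : IsStdQuot HO ρ e c d) : (Fin d → V) ≃ₗ[k] W :=
  LinearEquiv.ofBijective (HO.powSum e d)
    (by convert hW.xbasis using 1; ext F; exact powSum_apply e d F)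

theorem equiv_apply (hW : IsStdQuot HO ρ e c d) (F : Fin d → V) :
    hW.equiv F = HO.powSum e d F := rfl

theorem injective (hW : IsStdQuot HO ρ e c d) (hd : 0 < d) : Function.Injective e := by
  intro v v' h
  refine Pi.single_injective (i := (⟨0, hd⟩ : Fin d)) (hW.equiv.injective ?_)
  simp only [equiv_apply, powSum_single, h]

theorem aeval_smul_ne_zero (hW : IsStdQuot HO ρ e c d) {q : k[X]} (hq0 : q ≠ 0)
    (hq : q.degree < d) {v : V} (hv : v ≠ 0) : aeval HO.x q • e v ≠ 0 := by
  rw [← powSum_coeff e hq, ← hW.equiv_apply, map_ne_zero_iff _ hW.equiv.injective]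
  intro hF
  have := congrFun hF ⟨q.natDegree, (natDegree_lt_iff_degree_lt hq0).mpr hq⟩
  exact smul_ne_zero (leadingCoeff_ne_zero.mpr hq0) hv this

theorem minpoly_eq [Nontrivial V] (hp : p.Monic) (hd : p.natDegree = d)
    (hW : IsStdQuot HO ρ e (aeval HO.x p) d) : minpoly k (Algebra.lsmul k k W HO.x) = p := by
  refine (minpoly.unique _ _ hp (aeval_lsmul_eq_zero hW.ann) fun q hq hq0 => ?_).symm
  rw [degree_eq_natDegree hp.ne_zero, hd]
  by_contra! hlt
  obtain ⟨v, hv⟩ := exists_ne (0 : V)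
  apply hW.aeval_smul_ne_zero hq.ne_zero hlt hv
  rw [← Algebra.lsmul_apply (R := k) (B := k), ← aeval_algHom_apply, hq0, LinearMap.zero_apply]

noncomputable def coord (hW : IsStdQuot HO ρ e c d) (j : Fin d) : W →ₗ[k] V :=
  LinearMap.proj j ∘ₗ hW.equiv.symm.toLinearMap

theorem coord_of_smul (hW : IsStdQuot HO ρ e c d) (j : Fin d) (g : G) (w : W) :
    hW.coord j (HO.emb (MonoidAlgebra.of k G g) • w)
      = (χ g : k) ^ (j : ℕ) • ρ g (hW.coord j w) := by
  obtain ⟨F, rfl⟩ := hW.equiv.surjective w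
  rw [equiv_apply, of_smul_powSum hW.equivariant, ← hW.equiv_apply, ← hW.equiv_apply]
  simp [coord]

theorem twistEquiv_of_linearEquiv (hρ : IsSimpleRep ρ) (hρ' : IsSimpleRep ρ') (hd : 0 < d)
    (hW : IsStdQuot HO ρ e c d) (hW' : IsStdQuot HO ρ' e' c' d') (φ : W ≃ₗ[H] W') :
    TwistEquiv χ ρ ρ' := by
  have := hρ.1
  obtain ⟨v, hv⟩ := exists_ne (0 : V)
  have hφv : hW'.equiv.symm (φ (e v)) ≠ 0 := by
    simpa using (hW.injective hd).ne hv
  obtain ⟨j, hj⟩ := Function.ne_iff.mp hφv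
  let f := hW'.coord j ∘ₗ φ.toLinearMap.restrictScalars k ∘ₗ e
  refine ⟨-j, isTwistIso_of_ne_zero hρ hρ' (f := f) (fun h => hj (LinearMap.congr_fun h v))
    fun g v => ?_⟩
  simp only [f, LinearMap.comp_apply, LinearMap.restrictScalars_apply, LinearEquiv.coe_coe,
    hW.equivariant, map_smul, coord_of_smul]

noncomputable def lift (hW : IsStdQuot HO ρ e c d) (ψ : V →ₗ[k] M) : W →ₗ[k] M :=
  HO.powSum ψ d ∘ₗ hW.equiv.symm.toLinearMap

theorem lift_equiv (hW : IsStdQuot HO ρ e c d) (ψ : V →ₗ[k] M) (F : Fin d → V) :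
    hW.lift ψ (hW.equiv F) = HO.powSum ψ d F := by
  simp [lift]

theorem lift_aeval_smul (hp : p.Monic) (hd : p.natDegree = d)
    (hW : IsStdQuot HO ρ e (aeval HO.x p) d) {ψ : V →ₗ[k] M}
    (hann : ∀ m : M, aeval HO.x p • m = 0) (q : k[X]) (v : V) :
    hW.lift ψ (aeval HO.x q • e v) = aeval HO.x q • ψ v := by
  have hdeg : (q %ₘ p).degree < d := by
    simpa only [degree_eq_natDegree hp.ne_zero, hd] using degree_modByMonic_lt q hp
  rw [← aeval_smul_modByMonic hW.ann, ← aeval_smul_modByMonic hann, ← powSum_coeff e hdeg,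
    ← hW.equiv_apply, lift_equiv, powSum_coeff ψ hdeg]

theorem lift_smul_e (hp : p.Monic) (hd : p.natDegree = d)
    (hW : IsStdQuot HO ρ e (aeval HO.x p) d) {ψ : V →ₗ[k] M}
    (hann : ∀ m : M, aeval HO.x p • m = 0)
    (hψ : ∀ g v, ψ (ρ g v) = HO.emb (MonoidAlgebra.of k G g) • ψ v) (h : H) (v : V) :
    hW.lift ψ (h • e v) = h • ψ v := by
  have hmem : h ∈ Submodule.span k
      (Set.range fun p : G × ℕ => HO.emb (MonoidAlgebra.of k G p.1) * HO.x ^ p.2) :=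
    HO.basis_span ▸ Submodule.mem_top
  induction hmem using Submodule.span_induction with
  | mem h hh =>
    obtain ⟨⟨g, n⟩, rfl⟩ := hh
    have hxn := hW.lift_aeval_smul (ψ := ψ) hp hd hann (X ^ n)
    rw [aeval_X_pow] at hxn
    rw [mul_smul, mul_smul, of_smul_x_pow_smul, of_smul_x_pow_smul, ← hW.equivariant, ← hψ,
      map_smul, hxn]
  | zero => simp
  | add h h' _ _ ih ih' => rw [add_smul, add_smul, map_add, ih, ih']
  | smul a h _ ih => rw [smul_assoc, smul_assoc, map_smul, ih]

theorem lift_smul (hp : p.Monic) (hd : p.natDegree = d)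
    (hW : IsStdQuot HO ρ e (aeval HO.x p) d) {ψ : V →ₗ[k] M}
    (hann : ∀ m : M, aeval HO.x p • m = 0)
    (hψ : ∀ g v, ψ (ρ g v) = HO.emb (MonoidAlgebra.of k G g) • ψ v) (h : H) (w : W) :
    hW.lift ψ (h • w) = h • hW.lift ψ w := by
  obtain ⟨F, rfl⟩ := hW.equiv.surjective w
  simp only [equiv_apply, powSum_apply, Finset.smul_sum, map_sum, ← mul_smul,
    hW.lift_smul_e hp hd hann hψ]

theorem nonempty_linearEquiv_of_isTwistIso (hp : p.Monic) (hd : p.natDegree = d)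
    (hp0 : p.coeff 0 ≠ 0) (hW : IsStdQuot HO ρ e (aeval HO.x p) d)
    (hW' : IsStdQuot HO ρ' e' (aeval HO.x p) d) {n : ℕ} (htw : IsTwistIso χ (-n) ρ ρ') :
    Nonempty (W ≃ₗ[H] W') := by
  obtain ⟨f, hf⟩ := htw
  let xn := Algebra.lsmul k k W' (HO.x ^ n)
  let ψ := xn ∘ₗ e' ∘ₗ f.toLinearMap
  have hψ : ∀ g v, ψ (ρ g v) = HO.emb (MonoidAlgebra.of k G g) • ψ v := by
    intro g v
    simp only [ψ, xn, LinearMap.comp_apply, Algebra.lsmul_apply, LinearEquiv.coe_coe]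
    rw [of_smul_x_pow_smul, ← hW'.equivariant, hf, map_smul, smul_comm _ (_ : k), smul_smul,
      mul_comm, units_zpow_neg_mul_pow, one_smul]
  have hlift : ⇑(hW.lift ψ)
      = xn ∘ hW'.equiv ∘ LinearEquiv.piCongrRight (fun _ => f) ∘ hW.equiv.symm := by
    funext w
    obtain ⟨F, rfl⟩ := hW.equiv.surjective w
    simp only [Function.comp_apply, LinearEquiv.symm_apply_apply, lift_equiv]
    simp only [equiv_apply, powSum_apply, ψ, xn, LinearMap.comp_apply, Algebra.lsmul_apply,
      LinearEquiv.coe_coe, LinearEquiv.piCongrRight_apply, Finset.smul_sum, ← mul_smul,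
      ← pow_add, add_comm n]
  have hxn : Function.Bijective xn := by
    rw [← Module.End.isUnit_iff, show xn = Algebra.lsmul k k W' HO.x ^ n from map_pow _ _ _]
    exact (isUnit_of_aeval_eq_zero (aeval_lsmul_eq_zero hW'.ann) hp0).pow n
  have hbij : Function.Bijective (hW.lift ψ) := hlift ▸ hxn.comp (hW'.equiv.bijective.comp
    ((LinearEquiv.piCongrRight _).bijective.comp hW.equiv.symm.bijective))
  exact ⟨.ofBijective { hW.lift ψ with map_smul' := hW.lift_smul hp hd hW'.ann hψ } hbij⟩

end IsStdQuot

theorem stmt_14_general {k G H : Type} [Field k] [Group G]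
    [Ring H] [Algebra k H]
    {χ : G →* kˣ}
    (s : ℕ) (hs : 1 < s) (hχord : orderOf χ = s)
    (HO : HopfOre k G H χ)
    {V V' : Type} [AddCommGroup V] [Module k V]
    [AddCommGroup V'] [Module k V']
    (ρ : Representation k G V) (hρ : IsSimpleRep ρ)
    (ρ' : Representation k G V') (hρ' : IsSimpleRep ρ')
    (α β : k) (hα : α ≠ 0) (r t : ℕ) (hr : 0 < r)
    {W W' : Type} [AddCommGroup W] [Module k W] [Module H W] [IsScalarTower k H W]
    [AddCommGroup W'] [Module k W'] [Module H W'] [IsScalarTower k H W']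
    (e : V →ₗ[k] W) (hW : IsStdQuot HO ρ e ((HO.x ^ s - algebraMap k H α) ^ r) (r * s))
    (e' : V' →ₗ[k] W')
    (hW' : IsStdQuot HO ρ' e' ((HO.x ^ s - algebraMap k H β) ^ t) (t * s)) :
    Nonempty (W ≃ₗ[H] W') ↔ (r = t ∧ α = β ∧ TwistEquiv χ ρ ρ') := by
  have hs0 : 0 < s := by omega
  have haeval (γ : k) (n : ℕ) :
      (HO.x ^ s - algebraMap k H γ) ^ n = aeval HO.x ((X ^ s - C γ) ^ n) := by simp
  have hmonic (γ : k) (n : ℕ) : ((X ^ s - C γ) ^ n).Monic := (monic_X_pow_sub_C γ hs0.ne').pow n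
  have hdeg (γ : k) (n : ℕ) : ((X ^ s - C γ) ^ n).natDegree = n * s := by
    rw [natDegree_pow, natDegree_X_pow_sub_C]
  rw [haeval] at hW hW'
  have := hρ.1
  have := hρ'.1
  constructor
  · rintro ⟨φ⟩
    have hmin := minpoly_lsmul_eq_of_linearEquiv (k := k) φ HO.x
    rw [hW.minpoly_eq (hmonic α r) (hdeg α r), hW'.minpoly_eq (hmonic β t) (hdeg β t)] at hmin
    obtain ⟨rfl, rfl⟩ := eq_of_X_pow_sub_C_pow_eq hs0 hr hmin.symm
    exact ⟨rfl, rfl, hW.twistEquiv_of_linearEquiv hρ hρ' (by positivity) hW' φ⟩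
  · rintro ⟨rfl, rfl, u, htw⟩
    obtain ⟨n, hn⟩ := htw.exists_neg_natCast hχord hs0
    have hcoeff : ((X ^ s - C α) ^ r).coeff 0 ≠ 0 := by
      simp [coeff_zero_eq_eval_zero, zero_pow hs0.ne', hα]
    exact hW.nonempty_linearEquiv_of_isTwistIso (hmonic α r) (hdeg α r) hcoeff hW' hn

/-- **Proposition 4.12.** Assume `kG` is finite-dimensional and semisimple and
`|q| = |χ| = s`.  Then `V_r(i,α) ≅ V_t(j,β)` as `H`-modules if and only if `r = t`,
`α = β` and `[i] = [j]`. -/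
theorem stmt_14 {k G H : Type} [Field k] [IsAlgClosed k] [Group G] [Finite G]
    [Ring H] [Algebra k H]
    {χ : G →* kˣ} (a : G) (ha : a ∈ Subgroup.center G) (hχa : χ a ≠ 1)
    (hss : IsSemisimpleRing (MonoidAlgebra k G))
    (s : ℕ) (hs : 1 < s) (hχord : orderOf χ = s) (hqord : orderOf (χ a) = s)
    (HO : HopfOre k G H χ)
    {V V' : Type} [AddCommGroup V] [Module k V] [FiniteDimensional k V]
    [AddCommGroup V'] [Module k V'] [FiniteDimensional k V']
    (ρ : Representation k G V) (hρ : IsSimpleRep ρ)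
    (ρ' : Representation k G V') (hρ' : IsSimpleRep ρ')
    (α β : k) (hα : α ≠ 0) (hβ : β ≠ 0) (r t : ℕ) (hr : 0 < r) (ht : 0 < t)
    {W W' : Type} [AddCommGroup W] [Module k W] [Module H W] [IsScalarTower k H W]
    [AddCommGroup W'] [Module k W'] [Module H W'] [IsScalarTower k H W']
    (e : V →ₗ[k] W) (hW : IsStdQuot HO ρ e ((HO.x ^ s - algebraMap k H α) ^ r) (r * s))
    (e' : V' →ₗ[k] W')
    (hW' : IsStdQuot HO ρ' e' ((HO.x ^ s - algebraMap k H β) ^ t) (t * s)) :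
    Nonempty (W ≃ₗ[H] W') ↔ (r = t ∧ α = β ∧ TwistEquiv χ ρ ρ') :=
  stmt_14_general s hs hχord HO ρ hρ ρ' hρ' α β hα r t hr e hW e' hW'

end HopfOrePaper
end

section
/- Let 1 ≤ l ≤ m−1 and let V_1^{⊗l} denote the l-fold tensor product of the two-dimensional simple kD_n-module V_1 with itself (diagonal D_n-action). Then: (1) if l = 2r−1 is odd, V_1^{⊗(2r−1)} ≅ ⊕_{j=1}^{r} C(2r−1, r−j) · V_{2j−1}; (2) if l = 2r is even, V_1^{⊗2r} ≅ C(2r−1, r−1) · (V_ε ⊕ V_λ) ⊕ (⊕_{j=1}^{r} C(2r, r−j) · V_{2j}), where C(n,k) denotes the binomial coefficient and n·V the direct sum of n copies of V. -/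
open scoped TensorProduct

namespace HopfOrePaper

variable {k G H : Type} [Field k] [Group G] [Ring H] [Algebra k H] {χ : G →* kˣ}

/-- The `l`-fold tensor power of a representation (with diagonal `G`-action). -/
noncomputable def piTensorRep {k G V : Type} [Field k] [Group G] [AddCommGroup V]
    [Module k V] (ρ : Representation k G V) (l : ℕ) :
    Representation k G (PiTensorProduct k fun _ : Fin l => V) where
  toFun g := PiTensorProduct.map fun _ => ρ g
  map_one' := by
    show PiTensorProduct.map (fun _ : Fin l => ρ 1) = 1
    rw [show (fun _ : Fin l => ρ 1) = fun _ : Fin l => (LinearMap.id : V →ₗ[k] V) from by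
      funext _; rw [map_one]; rfl]
    rw [PiTensorProduct.map_id]
    rfl
  map_mul' g h := by
    show PiTensorProduct.map (fun _ : Fin l => ρ (g * h))
        = PiTensorProduct.map (fun _ : Fin l => ρ g) * PiTensorProduct.map (fun _ : Fin l => ρ h)
    rw [show (fun _ : Fin l => ρ (g * h)) = fun _ : Fin l => (ρ g ∘ₗ ρ h : V →ₗ[k] V) from by
      funext _; rw [map_mul]; rfl]
    rw [PiTensorProduct.map_comp]
    rfl


/-!
`V₁^{⊗l}` has the basis `e_s = ⨂ᵢ e_{[i ∈ s]}` indexed by the subsets `s` of `{1, …, l}`, on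
which `a` acts by the scalar `ω ^ (|sᶜ| - |s|)` and `b` by `e_s ↦ e_{sᶜ}`. So for `|s| < l / 2`
the pair `e_s, e_{sᶜ}` spans a copy of `V_{l - 2|s|}`, and there are `C(l, |s|)` such pairs.
For `l = 2r` the `C(2r, r)` vectors `e_s` with `|s| = r` are fixed by `a` and fall into
`C(2r - 1, r - 1)` complementary pairs; replacing each pair by `e_s + e_{sᶜ}` (trivial) and
`e_{sᶜ} - e_s` (a copy of `V_λ`) is again a change of basis because `2 ≠ 0`.
-/

theorem _root_.DihedralGroup.induction_r_one_sr_zero {n : ℕ} [NeZero n]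
    {C : DihedralGroup n → Prop} (one : C 1) (mul : ∀ g h, C g → C h → C (g * h))
    (hr : C (.r 1)) (hs : C (.sr 0)) (g : DihedralGroup n) : C g := by
  have hpow (j : ℕ) : C (.r 1 ^ j) := by
    induction j with
    | zero => simpa using one
    | succ j ih => simpa [pow_succ] using mul _ _ ih hr
  have hrot (i : ZMod n) : C (.r i) := by simpa using hpow i.val
  cases g with
  | r i => exact hrot i
  | sr i => simpa using mul _ _ hs (hrot i)

section SubRepIso

variable {X V : Type} [AddCommGroup X] [Module k X] [AddCommGroup V] [Module k V]

theorem subRepIso_of_intertwining {ρT : Representation k G X} {p : Submodule k X}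
    {ρ : Representation k G V} (f : V ≃ₗ[k] p) (hf : ∀ g v, (f (ρ g v) : X) = ρT g (f v)) :
    SubRepIso ρT p ρ := by
  refine ⟨fun g y hy => ?_, f, hf⟩
  obtain ⟨v, hv⟩ := f.surjective ⟨y, hy⟩
  rw [show y = f v by rw [hv], ← hf]
  exact (f (ρ g v)).2

variable {n : ℕ} [NeZero n] {ρT : Representation k (DihedralGroup n) X}

theorem subRepIso_of_intertwining_generators {p : Submodule k X}
    {ρ : Representation k (DihedralGroup n) V} (f : V ≃ₗ[k] p)
    (hr : ∀ v, (f (ρ (.r 1) v) : X) = ρT (.r 1) (f v))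
    (hs : ∀ v, (f (ρ (.sr 0) v) : X) = ρT (.sr 0) (f v)) :
    SubRepIso ρT p ρ := by
  refine subRepIso_of_intertwining f fun g => ?_
  induction g using DihedralGroup.induction_r_one_sr_zero with
  | one => simp
  | mul g h hg hh => intro v; simp [Module.End.mul_apply, hg, hh]
  | hr => exact hr
  | hs => exact hs

theorem subRepIso_span_singleton {τ : Representation k (DihedralGroup n) k} {α β : k}
    (hτr : ∀ x, τ (.r 1) x = α * x) (hτs : ∀ x, τ (.sr 0) x = β * x)
    {u : X} (hu : u ≠ 0) (hur : ρT (.r 1) u = α • u) (hus : ρT (.sr 0) u = β • u) :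
    SubRepIso ρT (k ∙ u) τ := by
  refine subRepIso_of_intertwining_generators (LinearEquiv.toSpanNonzeroSingleton k X u hu)
    (fun x => ?_) (fun x => ?_) <;> simp [hτr, hτs, hur, hus, smul_smul, mul_comm]

theorem subRepIso_span_pair {ρ : Representation k (DihedralGroup n) (Fin 2 → k)} {α β : k}
    (hρr : ∀ v, ρ (.r 1) v = ![α * v 0, β * v 1]) (hρs : ∀ v, ρ (.sr 0) v = ![v 1, v 0])
    {u : Fin 2 → X} (hu : LinearIndependent k u)
    (hur0 : ρT (.r 1) (u 0) = α • u 0) (hur1 : ρT (.r 1) (u 1) = β • u 1)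
    (hus0 : ρT (.sr 0) (u 0) = u 1) (hus1 : ρT (.sr 0) (u 1) = u 0) :
    SubRepIso ρT (Submodule.span k (Set.range u)) ρ := by
  refine subRepIso_of_intertwining_generators (Module.Basis.span hu).equivFun.symm
    (fun v => ?_) (fun v => ?_) <;>
  simp [Fin.sum_univ_two, hρr, hρs, hur0, hur1, hus0, hus1, smul_smul, mul_comm, add_comm]

end SubRepIso

section BasisFibers

variable {ι S X : Type} [AddCommGroup X] [Module k X]

theorem _root_.Module.Basis.iSupIndep_span_image_fiber (b : Module.Basis ι k X) (π : ι → S) :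
    iSupIndep fun s => Submodule.span k (b '' (π ⁻¹' {s})) := by
  intro s
  refine (b.linearIndependent.disjoint_span_image disjoint_compl_right).mono_right ?_
  refine iSup₂_le fun t hts => Submodule.span_mono (Set.image_mono fun i hi his => ?_)
  exact hts (hi.symm.trans his)

theorem _root_.Module.Basis.iSup_span_image_fiber (b : Module.Basis ι k X) (π : ι → S) :
    ⨆ s, Submodule.span k (b '' (π ⁻¹' {s})) = ⊤ := by
  rw [← Submodule.span_iUnion, ← Set.image_iUnion, ← Set.preimage_iUnion,
    Set.iUnion_singleton_eq_range]
  simp [b.span_eq]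

end BasisFibers

section TwistBasis

variable {ι X : Type} [AddCommGroup X] [Module k X] (e : Module.Basis ι k X)
  {τ : ι → ι} (ε : ι → k)

theorem top_le_span_twist (hτ : Function.Involutive τ) (hε : ∀ i, ε (τ i) = -ε i)
    (hε2 : ∀ i, 1 + ε i ^ 2 ≠ 0) :
    ⊤ ≤ Submodule.span k (Set.range fun i => e i + ε i • e (τ i)) := by
  rw [← e.span_eq, Submodule.span_le]
  rintro _ ⟨i, rfl⟩
  have hcomb : e i = (1 + ε i ^ 2)⁻¹ •
      ((e i + ε i • e (τ i)) - ε i • (e (τ i) + ε (τ i) • e (τ (τ i)))) := by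
    rw [hτ i, hε, eq_inv_smul_iff₀ (hε2 i)]
    module
  rw [SetLike.mem_coe, hcomb]
  exact Submodule.smul_mem _ _ (Submodule.sub_mem _ (Submodule.subset_span ⟨i, rfl⟩)
    (Submodule.smul_mem _ _ (Submodule.subset_span ⟨τ i, rfl⟩)))

noncomputable def twistBasis [Fintype ι] (hτ : Function.Involutive τ) (hε : ∀ i, ε (τ i) = -ε i)
    (hε2 : ∀ i, 1 + ε i ^ 2 ≠ 0) : Module.Basis ι k X :=
  basisOfTopLeSpanOfCardEqFinrank _ (top_le_span_twist e ε hτ hε hε2)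
    (Module.finrank_eq_card_basis e).symm

theorem twistBasis_apply [Fintype ι] (hτ : Function.Involutive τ) (hε : ∀ i, ε (τ i) = -ε i)
    (hε2 : ∀ i, 1 + ε i ^ 2 ≠ 0) (i : ι) :
    twistBasis e ε hτ hε hε2 i = e i + ε i • e (τ i) := by
  simp [twistBasis]

end TwistBasis

section Combinatorics

open scoped Finset

section Involution

variable {ι : Type} {τ : ι → ι} (hτ : Function.Involutive τ) (p : ι → Prop) [DecidablePred p]
  (hp : ∀ i, p (τ i) ↔ ¬ p i)

def _root_.Function.Involutive.subtypeProdFinTwoEquiv : {i // p i} × Fin 2 ≃ ι where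
  toFun x := ![(x.1 : ι), τ x.1] x.2
  invFun i := if h : p i then (⟨i, h⟩, 0) else (⟨τ i, (hp i).2 h⟩, 1)
  left_inv := by
    rintro ⟨⟨i, hi⟩, j⟩
    fin_cases j <;> simp [hi, hp, hτ i]
  right_inv i := by by_cases h : p i <;> simp [h, hτ i]

@[simp]
theorem _root_.Function.Involutive.subtypeProdFinTwoEquiv_apply_zero (x : {i // p i}) :
    hτ.subtypeProdFinTwoEquiv p hp (x, 0) = x :=
  rfl

@[simp]
theorem _root_.Function.Involutive.subtypeProdFinTwoEquiv_apply_one (x : {i // p i}) :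
    hτ.subtypeProdFinTwoEquiv p hp (x, 1) = τ x :=
  rfl

end Involution

noncomputable def finsetCardLtEquiv (l r : ℕ) :
    (Σ j : Fin r, Fin (l.choose (r - 1 - j))) ≃ {s : Finset (Fin l) // #s < r} :=
  (Equiv.sigmaCongrRight fun j : Fin r =>
    (Fintype.equivFinOfCardEq (α := {s : Finset (Fin l) // #s = r - 1 - j}) (by simp)).symm).trans
    { toFun x := ⟨x.2.1, by have := x.2.2; omega⟩
      invFun s := ⟨⟨r - 1 - #s.1, by omega⟩, ⟨s, by have := s.2; simp; omega⟩⟩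
      left_inv := by
        rintro ⟨j, s, hs⟩
        exact Sigma.subtype_ext (by ext; simp; omega) rfl
      right_inv _ := rfl }

theorem card_finsetCardLtEquiv {l r : ℕ} (σ : Σ j : Fin r, Fin (l.choose (r - 1 - j))) :
    #(finsetCardLtEquiv l r σ).1 = r - 1 - σ.1 :=
  ((Fintype.equivFinOfCardEq (α := {s : Finset (Fin l) // #s = r - 1 - σ.1}) (by simp)).symm σ.2).2

theorem card_finset_len_and_notMem {α : Type} [Fintype α] [DecidableEq α] (w : ℕ) (a : α) :
    Fintype.card {s : Finset α // #s = w ∧ a ∉ s} = (Fintype.card α - 1).choose w := by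
  rw [Fintype.card_subtype, ← Finset.card_univ, ← Finset.card_erase_of_mem (Finset.mem_univ a),
    ← Finset.card_powersetCard]
  congr 1
  ext s
  simp [Finset.mem_powersetCard, Finset.subset_erase, and_comm]

noncomputable def finsetCardEqNotMemEquiv {r : ℕ} (hr : 1 ≤ r) (i₀ : Fin (2 * r)) :
    Fin ((2 * r - 1).choose (r - 1)) ≃ {s : Finset (Fin (2 * r)) // #s = r ∧ i₀ ∉ s} :=
  (Fintype.equivFinOfCardEq (by
    rw [card_finset_len_and_notMem, Fintype.card_fin]
    exact Nat.choose_symm_of_eq_add (by omega))).symm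

/-- `(x, 0)` is a representative (a set of size `r` avoiding `i₀`, or a set of size `< r`) and
`(x, 1)` its complement. -/
noncomputable def evenSplitEquiv {r : ℕ} (hr : 1 ≤ r) (i₀ : Fin (2 * r)) :
    (Fin ((2 * r - 1).choose (r - 1)) ⊕ (Σ j : Fin r, Fin ((2 * r).choose (r - 1 - j)))) × Fin 2
      ≃ Finset (Fin (2 * r)) :=
  have hcompl (s : Finset (Fin (2 * r))) : #s + #sᶜ = 2 * r := by simp
  have hp (s : Finset (Fin (2 * r))) :
      (#sᶜ = r ∧ i₀ ∉ sᶜ ∨ #sᶜ < r) ↔ ¬(#s = r ∧ i₀ ∉ s ∨ #s < r) := by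
    have := hcompl s
    by_cases hi : i₀ ∈ s <;> simp [hi] <;> omega
  have hdisj : Disjoint (fun s : Finset (Fin (2 * r)) => #s = r ∧ i₀ ∉ s) (fun s => #s < r) :=
    Pi.disjoint_iff.2 fun s => Prop.disjoint_iff.2 (by omega)
  ((((finsetCardEqNotMemEquiv hr i₀).sumCongr (finsetCardLtEquiv (2 * r) r)).trans
    (subtypeOrEquiv _ _ hdisj).symm).prodCongr (Equiv.refl (Fin 2))).trans
    (Function.Involutive.subtypeProdFinTwoEquiv compl_involutive _ hp)

variable (k) in
/-- With this sign, `twistBasis` replaces a middle pair `s ∌ i₀`, `sᶜ` by `e_s + e_{sᶜ}` and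
`e_{sᶜ} - e_s`. -/
def middleSign {l : ℕ} (i₀ : Fin l) (r : ℕ) (s : Finset (Fin l)) : k :=
  if #s = r then (if i₀ ∈ s then -1 else 1) else 0

theorem middleSign_compl {r : ℕ} (i₀ : Fin (2 * r)) (s : Finset (Fin (2 * r))) :
    middleSign k i₀ r sᶜ = -middleSign k i₀ r s := by
  have hmid : #sᶜ = r ↔ #s = r := by
    have : #s + #sᶜ = 2 * r := by simp
    omega
  by_cases hs : #s = r <;> by_cases hi : i₀ ∈ s <;> simp [middleSign, hmid, hs, hi]

theorem one_add_middleSign_sq_ne_zero (h2 : (2 : k) ≠ 0) {l : ℕ} (i₀ : Fin l) (r : ℕ)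
    (s : Finset (Fin l)) : 1 + middleSign k i₀ r s ^ 2 ≠ 0 := by
  simp only [middleSign]
  split_ifs <;> norm_num [h2]

end Combinatorics

section TensorPower

open scoped Finset

def finsetEquivFunFinTwo (α : Type) [Fintype α] [DecidableEq α] : Finset α ≃ (α → Fin 2) where
  toFun s i := if i ∈ s then 1 else 0
  invFun f := {i | f i = 1}
  left_inv s := by ext i; by_cases hi : i ∈ s <;> simp [hi]
  right_inv f := by funext i; by_cases hi : f i = 1 <;> simp [hi]; omega

variable (k) in
noncomputable def tensorPowerBasis (l : ℕ) :
    Module.Basis (Finset (Fin l)) k (⨂[k]^l (Fin 2 → k)) :=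
  (Basis.piTensorProduct fun _ => Pi.basisFun k (Fin 2)).reindex (finsetEquivFunFinTwo _).symm

theorem tensorPowerBasis_apply (l : ℕ) (s : Finset (Fin l)) :
    tensorPowerBasis k l s = ⨂ₜ[k] i, Pi.single (if i ∈ s then 1 else 0) 1 := by
  simp [tensorPowerBasis, finsetEquivFunFinTwo]

theorem piTensorRep_tprod {V : Type} [AddCommGroup V] [Module k V] (ρ : Representation k G V)
    (l : ℕ) (g : G) (v : Fin l → V) :
    piTensorRep ρ l g (⨂ₜ[k] i, v i) = ⨂ₜ[k] i, ρ g (v i) :=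
  PiTensorProduct.map_tprod _ _

variable {ρ : Representation k G (Fin 2 → k)} {g : G} {l : ℕ}

theorem piTensorRep_tensorPowerBasis_of_diagonal {ω : k} (hω : ω ≠ 0)
    (hρ : ∀ v, ρ g v = ![ω * v 0, ω⁻¹ * v 1]) (s : Finset (Fin l)) :
    piTensorRep ρ l g (tensorPowerBasis k l s)
      = ω ^ ((#sᶜ : ℤ) - #s) • tensorPowerBasis k l s := by
  have hfactor (i : Fin l) : ρ g (Pi.single (if i ∈ s then 1 else 0) 1)
      = (if i ∈ s then ω⁻¹ else ω) • Pi.single (if i ∈ s then 1 else 0) 1 := by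
    funext j
    by_cases hi : i ∈ s <;> fin_cases j <;> simp [hρ, hi]
  rw [tensorPowerBasis_apply, piTensorRep_tprod, funext hfactor,
    MultilinearMap.map_smul_univ, Finset.prod_ite, zpow_sub₀ hω]
  simp [Finset.filter_not, Finset.compl_eq_univ_sdiff, div_eq_mul_inv, mul_comm]

theorem piTensorRep_tensorPowerBasis_of_swap (hρ : ∀ v, ρ g v = ![v 1, v 0])
    (s : Finset (Fin l)) :
    piTensorRep ρ l g (tensorPowerBasis k l s) = tensorPowerBasis k l sᶜ := by
  rw [tensorPowerBasis_apply, tensorPowerBasis_apply, piTensorRep_tprod]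
  congr 1
  funext i j
  by_cases hi : i ∈ s <;> fin_cases j <;> simp [hρ, hi]

end TensorPower

section TensorPowerPieces

open scoped Finset

variable {n : ℕ} [NeZero n] {ρ : Representation k (DihedralGroup n) (Fin 2 → k)} {ω : k}
  {l : ℕ}

theorem subRepIso_tensorPower_pair (hω : ω ≠ 0)
    (hρr : ∀ v, ρ (.r 1) v = ![ω * v 0, ω⁻¹ * v 1]) (hρs : ∀ v, ρ (.sr 0) v = ![v 1, v 0])
    {s : Finset (Fin l)} {d : ℕ} (hd : (#sᶜ : ℤ) - #s = d)
    {ρ' : Representation k (DihedralGroup n) (Fin 2 → k)}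
    (hρ'r : ∀ v, ρ' (.r 1) v = ![ω ^ d * v 0, (ω ^ d)⁻¹ * v 1])
    (hρ's : ∀ v, ρ' (.sr 0) v = ![v 1, v 0])
    {u : Fin 2 → ⨂[k]^l (Fin 2 → k)} (hu : LinearIndependent k u)
    (hu0 : u 0 = tensorPowerBasis k l s) (hu1 : u 1 = tensorPowerBasis k l sᶜ) :
    SubRepIso (piTensorRep ρ l) (Submodule.span k (Set.range u)) ρ' := by
  have hd' : (#s : ℤ) - #sᶜ = -d := by omega
  refine subRepIso_span_pair hρ'r hρ's hu ?_ ?_ ?_ ?_ <;>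
    simp only [hu0, hu1, piTensorRep_tensorPowerBasis_of_diagonal hω hρr,
      piTensorRep_tensorPowerBasis_of_swap hρs, hd, hd', compl_compl, zpow_neg, zpow_natCast]

theorem subRepIso_tensorPower_line (hω : ω ≠ 0)
    (hρr : ∀ v, ρ (.r 1) v = ![ω * v 0, ω⁻¹ * v 1]) (hρs : ∀ v, ρ (.sr 0) v = ![v 1, v 0])
    {s : Finset (Fin l)} (hs : #sᶜ = #s) {c : k} (hc : c * c = 1)
    {τ : Representation k (DihedralGroup n) k}
    (hτr : ∀ x, τ (.r 1) x = x) (hτs : ∀ x, τ (.sr 0) x = c * x)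
    {u : ⨂[k]^l (Fin 2 → k)} (hu : u ≠ 0)
    (hu_eq : u = tensorPowerBasis k l s + c • tensorPowerBasis k l sᶜ) :
    SubRepIso (piTensorRep ρ l) (k ∙ u) τ := by
  refine subRepIso_span_singleton (α := 1) (by simpa using hτr) hτs hu ?_ ?_
  · simp [hu_eq, piTensorRep_tensorPowerBasis_of_diagonal hω hρr, hs]
  · rw [hu_eq, map_add, map_smul, piTensorRep_tensorPowerBasis_of_swap hρs,
      piTensorRep_tensorPowerBasis_of_swap hρs, compl_compl, smul_add, smul_smul, hc, one_smul,
      add_comm]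

end TensorPowerPieces

section TensorPowerDecomposition

open scoped Finset

variable {n : ℕ} [NeZero n] {ω : k} {ρ2 : ℕ → Representation k (DihedralGroup n) (Fin 2 → k)}

theorem tensorPower_odd_decomposition (hω : ω ≠ 0)
    (hρ2r : ∀ d v, ρ2 d (.r 1) v = ![ω ^ d * v 0, (ω ^ d)⁻¹ * v 1])
    (hρ2s : ∀ d v, ρ2 d (.sr 0) v = ![v 1, v 0]) {r : ℕ} (hr : 1 ≤ r) :
    ∃ P : (Σ j : Fin r, Fin ((2 * r - 1).choose (r - 1 - (j : ℕ)))) →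
        Submodule k (⨂[k]^(2 * r - 1) (Fin 2 → k)),
      iSupIndep P ∧ iSup P = ⊤ ∧
      ∀ σ, SubRepIso (piTensorRep (ρ2 1) (2 * r - 1)) (P σ) (ρ2 (2 * (σ.1 : ℕ) + 1)) := by
  have hρr (v : Fin 2 → k) : ρ2 1 (.r 1) v = ![ω * v 0, ω⁻¹ * v 1] := by simpa using hρ2r 1 v
  have hp (s : Finset (Fin (2 * r - 1))) : #sᶜ < r ↔ ¬ #s < r := by
    rw [Finset.card_compl, Fintype.card_fin]; omega
  let L := finsetCardLtEquiv (2 * r - 1) r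
  let b := (tensorPowerBasis k (2 * r - 1)).reindex ((L.prodCongr (Equiv.refl (Fin 2))).trans
    (Function.Involutive.subtypeProdFinTwoEquiv compl_involutive _ hp)).symm
  refine ⟨fun σ => Submodule.span k (b '' (Prod.fst ⁻¹' {σ})), b.iSupIndep_span_image_fiber _,
    b.iSup_span_image_fiber _, fun σ => ?_⟩
  dsimp only
  rw [Set.preimage_fst_singleton_eq_range, ← Set.range_comp]
  have hcard : #(L σ).1 = r - 1 - σ.1 := card_finsetCardLtEquiv σ
  refine subRepIso_tensorPower_pair hω hρr (hρ2s 1) (s := (L σ).1) ?_ (hρ2r _) (hρ2s _)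
    (b.linearIndependent.comp _ (Prod.mk_right_injective σ)) ?_ ?_
  · rw [Finset.card_compl, Fintype.card_fin]
    have := σ.1.isLt
    omega
  · simp [b, L]
  · simp [b, L]

theorem tensorPower_even_decomposition (h2 : (2 : k) ≠ 0) (hω : ω ≠ 0)
    (hρ2r : ∀ d v, ρ2 d (.r 1) v = ![ω ^ d * v 0, (ω ^ d)⁻¹ * v 1])
    (hρ2s : ∀ d v, ρ2 d (.sr 0) v = ![v 1, v 0]) (lam : DihedralGroup n →* kˣ)
    (hlamr : (lam (.r 1) : k) = 1) (hlams : (lam (.sr 0) : k) = -1) {r : ℕ} (hr : 1 ≤ r) :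
    ∃ P : ((Fin ((2 * r - 1).choose (r - 1)) ⊕ Fin ((2 * r - 1).choose (r - 1))) ⊕
          (Σ j : Fin r, Fin ((2 * r).choose (r - 1 - (j : ℕ))))) →
        Submodule k (⨂[k]^(2 * r) (Fin 2 → k)),
      iSupIndep P ∧ iSup P = ⊤ ∧
      (∀ i, SubRepIso (piTensorRep (ρ2 1) (2 * r)) (P (.inl (.inl i)))
        (1 : Representation k (DihedralGroup n) k)) ∧
      (∀ i, SubRepIso (piTensorRep (ρ2 1) (2 * r)) (P (.inl (.inr i))) (charRep k lam)) ∧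
      (∀ σ : Σ j : Fin r, Fin ((2 * r).choose (r - 1 - (j : ℕ))),
        SubRepIso (piTensorRep (ρ2 1) (2 * r)) (P (.inr σ)) (ρ2 (2 * (σ.1 : ℕ) + 2))) := by
  have hρr (v : Fin 2 → k) : ρ2 1 (.r 1) v = ![ω * v 0, ω⁻¹ * v 1] := by simpa using hρ2r 1 v
  have hcompl (s : Finset (Fin (2 * r))) : #s + #sᶜ = 2 * r := by simp
  let i₀ : Fin (2 * r) := ⟨0, by omega⟩
  let M := finsetCardEqNotMemEquiv hr i₀
  let L := finsetCardLtEquiv (2 * r) r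
  let b := (twistBasis (tensorPowerBasis k (2 * r)) (middleSign k i₀ r) compl_involutive
    (middleSign_compl i₀) (one_add_middleSign_sq_ne_zero h2 i₀ r)).reindex
      (evenSplitEquiv hr i₀).symm
  let π (x : (Fin ((2 * r - 1).choose (r - 1)) ⊕ (Σ j : Fin r, Fin ((2 * r).choose (r - 1 - j))))
      × Fin 2) : (Fin ((2 * r - 1).choose (r - 1)) ⊕ Fin ((2 * r - 1).choose (r - 1))) ⊕
        (Σ j : Fin r, Fin ((2 * r).choose (r - 1 - (j : ℕ)))) :=
    x.1.elim (fun a => .inl (![.inl a, .inr a] x.2)) .inr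
  refine ⟨fun x => Submodule.span k (b '' (π ⁻¹' {x})), b.iSupIndep_span_image_fiber π,
    b.iSup_span_image_fiber π, fun a => ?_, fun a => ?_, fun σ => ?_⟩
  all_goals dsimp only
  · obtain ⟨hcard, hi₀⟩ := (M a).2
    have hfiber : π ⁻¹' {.inl (.inl a)} = {(.inl a, 0)} := by
      ext ⟨x | x, j⟩ <;> fin_cases j <;> simp [π]
    rw [hfiber, Set.image_singleton]
    refine subRepIso_tensorPower_line hω hρr (hρ2s 1) (s := (M a).1)
      (by have := hcompl (M a); omega) (one_mul 1) (fun x => rfl) (fun x => (one_mul x).symm)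
      (b.ne_zero _) ?_
    simp [b, evenSplitEquiv, twistBasis_apply, middleSign, M, hcard, hi₀]
  · obtain ⟨hcard, hi₀⟩ := (M a).2
    have hcard' : #(M a).1ᶜ = r := by have := hcompl (M a); omega
    have hfiber : π ⁻¹' {.inl (.inr a)} = {(.inl a, 1)} := by
      ext ⟨x | x, j⟩ <;> fin_cases j <;> simp [π]
    rw [hfiber, Set.image_singleton]
    refine subRepIso_tensorPower_line hω hρr (hρ2s 1) (s := (M a).1ᶜ)
      (by rw [compl_compl]; omega) (c := -1) (by norm_num)
      (fun x => show (lam (.r 1) : k) • x = x by rw [hlamr, one_smul])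
      (fun x => show (lam (.sr 0) : k) • x = -1 * x by rw [hlams, smul_eq_mul]) (b.ne_zero _) ?_
    simp [b, evenSplitEquiv, twistBasis_apply, middleSign, M, hcard', hi₀]
    exact (neg_one_smul k _).symm
  · have hcard : #(L σ).1 = r - 1 - σ.1 := card_finsetCardLtEquiv σ
    have hcard' := hcompl (L σ)
    have hfiber : π ⁻¹' {.inr σ} = Set.range ((.inr σ, ·)) := by
      ext ⟨x | x, j⟩ <;> fin_cases j <;> simp [π, eq_comm]
    rw [hfiber, ← Set.range_comp]
    refine subRepIso_tensorPower_pair hω hρr (hρ2s 1) (s := (L σ).1)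
      (by have := σ.1.isLt; omega) (hρ2r _) (hρ2s _)
      (b.linearIndependent.comp _ (Prod.mk_right_injective _)) ?_ ?_
    · simp [b, evenSplitEquiv, L, twistBasis_apply, middleSign, show #(L σ).1 ≠ r by omega]
    · simp [b, evenSplitEquiv, L, twistBasis_apply, middleSign, show #(L σ).1ᶜ ≠ r by omega]

end TensorPowerDecomposition

theorem stmt_18_general {k : Type} [Field k] [CharZero k]
    (m : ℕ) (hm1 : 1 < m)
    (ω : k) (hω : IsPrimitiveRoot ω (2 * m))
    -- the two-dimensional simple kD_n-modules V_l
    (ρ2 : ℕ → Representation k (DihedralGroup (2 * m)) (Fin 2 → k))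
    (hρ2r : ∀ (l : ℕ) (v : Fin 2 → k),
      ρ2 l (DihedralGroup.r 1) v = ![ω ^ l * v 0, (ω ^ l)⁻¹ * v 1])
    (hρ2s : ∀ (l : ℕ) (v : Fin 2 → k),
      ρ2 l (DihedralGroup.sr 0) v = ![v 1, v 0])
    -- the linear character λ of D_n
    (lam : DihedralGroup (2 * m) →* kˣ)
    (hlamr : (lam (DihedralGroup.r 1) : k) = 1)
    (hlams : (lam (DihedralGroup.sr 0) : k) = -1)
    (l : ℕ) :
    -- (1) the odd case
    (∀ r : ℕ, 1 ≤ r → l = 2 * r - 1 →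
      ∃ P : (Σ j : Fin r, Fin ((2 * r - 1).choose (r - 1 - (j : ℕ)))) →
          Submodule k (PiTensorProduct k fun _ : Fin l => (Fin 2 → k)),
        iSupIndep P ∧ iSup P = ⊤ ∧
        ∀ σ, SubRepIso (piTensorRep (ρ2 1) l) (P σ) (ρ2 (2 * (σ.1 : ℕ) + 1))) ∧
    -- (2) the even case
    (∀ r : ℕ, 1 ≤ r → l = 2 * r →
      ∃ P : ((Fin ((2 * r - 1).choose (r - 1)) ⊕ Fin ((2 * r - 1).choose (r - 1))) ⊕
            (Σ j : Fin r, Fin ((2 * r).choose (r - 1 - (j : ℕ))))) →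
          Submodule k (PiTensorProduct k fun _ : Fin l => (Fin 2 → k)),
        iSupIndep P ∧ iSup P = ⊤ ∧
        -- C(2r-1, r-1) copies of the trivial module V_ε
        (∀ i, SubRepIso (piTensorRep (ρ2 1) l) (P (Sum.inl (Sum.inl i)))
          (1 : Representation k (DihedralGroup (2 * m)) k)) ∧
        -- C(2r-1, r-1) copies of V_λ
        (∀ i, SubRepIso (piTensorRep (ρ2 1) l) (P (Sum.inl (Sum.inr i)))
          (charRep k lam)) ∧
        -- C(2r, r-j) copies of V_{2j}, j = 1, …, r
        (∀ σ : Σ j : Fin r, Fin ((2 * r).choose (r - 1 - (j : ℕ))),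
          SubRepIso (piTensorRep (ρ2 1) l) (P (Sum.inr σ)) (ρ2 (2 * (σ.1 : ℕ) + 2)))) := by
  have : NeZero (2 * m) := ⟨by omega⟩
  have hω0 : ω ≠ 0 := hω.ne_zero (by omega)
  refine ⟨fun r hr hl => ?_, fun r hr hl => ?_⟩
  · subst hl
    exact tensorPower_odd_decomposition hω0 hρ2r hρ2s hr
  · subst hl
    exact tensorPower_even_decomposition two_ne_zero hω0 hρ2r hρ2s lam hlamr hlams hr

/-- **Lemma 6.4.** Let `n = 2m` with `m > 1` odd, `char(k) = 0`, and let
`V_1, …, V_{m-1}` be the two-dimensional simple `kD_n`-modules (with `a` acting as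
`diag(ω^l, ω^{-l})` and `b` swapping coordinates).  For `1 ≤ l ≤ m-1`:
(1) if `l = 2r-1` is odd, then `V_1^{⊗(2r-1)} ≅ ⊕_{j=1}^{r} C(2r-1, r-j)·V_{2j-1}`;
(2) if `l = 2r` is even, then
`V_1^{⊗2r} ≅ C(2r-1, r-1)·(V_ε ⊕ V_λ) ⊕ (⊕_{j=1}^{r} C(2r, r-j)·V_{2j})`. -/
theorem stmt_18 {k : Type} [Field k] [IsAlgClosed k] [CharZero k]
    (m : ℕ) (hmodd : Odd m) (hm1 : 1 < m)
    (ω : k) (hω : IsPrimitiveRoot ω (2 * m))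
    -- the two-dimensional simple kD_n-modules V_l
    (ρ2 : ℕ → Representation k (DihedralGroup (2 * m)) (Fin 2 → k))
    (hρ2r : ∀ (l : ℕ) (v : Fin 2 → k),
      ρ2 l (DihedralGroup.r 1) v = ![ω ^ l * v 0, (ω ^ l)⁻¹ * v 1])
    (hρ2s : ∀ (l : ℕ) (v : Fin 2 → k),
      ρ2 l (DihedralGroup.sr 0) v = ![v 1, v 0])
    -- the linear character λ of D_n
    (lam : DihedralGroup (2 * m) →* kˣ)
    (hlamr : (lam (DihedralGroup.r 1) : k) = 1)
    (hlams : (lam (DihedralGroup.sr 0) : k) = -1)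
    (l : ℕ) (hl1 : 1 ≤ l) (hlm : l ≤ m - 1) :
    -- (1) the odd case
    (∀ r : ℕ, 1 ≤ r → l = 2 * r - 1 →
      ∃ P : (Σ j : Fin r, Fin ((2 * r - 1).choose (r - 1 - (j : ℕ)))) →
          Submodule k (PiTensorProduct k fun _ : Fin l => (Fin 2 → k)),
        iSupIndep P ∧ iSup P = ⊤ ∧
        ∀ σ, SubRepIso (piTensorRep (ρ2 1) l) (P σ) (ρ2 (2 * (σ.1 : ℕ) + 1))) ∧
    -- (2) the even case
    (∀ r : ℕ, 1 ≤ r → l = 2 * r →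
      ∃ P : ((Fin ((2 * r - 1).choose (r - 1)) ⊕ Fin ((2 * r - 1).choose (r - 1))) ⊕
            (Σ j : Fin r, Fin ((2 * r).choose (r - 1 - (j : ℕ))))) →
          Submodule k (PiTensorProduct k fun _ : Fin l => (Fin 2 → k)),
        iSupIndep P ∧ iSup P = ⊤ ∧
        -- C(2r-1, r-1) copies of the trivial module V_ε
        (∀ i, SubRepIso (piTensorRep (ρ2 1) l) (P (Sum.inl (Sum.inl i)))
          (1 : Representation k (DihedralGroup (2 * m)) k)) ∧
        -- C(2r-1, r-1) copies of V_λ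
        (∀ i, SubRepIso (piTensorRep (ρ2 1) l) (P (Sum.inl (Sum.inr i)))
          (charRep k lam)) ∧
        -- C(2r, r-j) copies of V_{2j}, j = 1, …, r
        (∀ σ : Σ j : Fin r, Fin ((2 * r).choose (r - 1 - (j : ℕ))),
          SubRepIso (piTensorRep (ρ2 1) l) (P (Sum.inr σ)) (ρ2 (2 * (σ.1 : ℕ) + 2)))) :=
  stmt_18_general m hm1 ω hω ρ2 hρ2r hρ2s lam hlamr hlams l

end HopfOrePaper
end
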